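/- arXiv:1604.02637 — 7 statements merged into one kernel-verified Lean document; each statement's English description precedes it below -/
import Mathlib

section
/- Let φ and ψ be two analytic (holomorphic) functions on a simply connected domain Ω ⊆ ℂ with φ not identically zero, and let r and s be two nonzero real numbers. Then |φ(z)|² = r·|ψ(z)|² + s for all z ∈ Ω if and only if there exist two complex constants c₁ and c₂ with |c₁|² = r·|c₂|² + s such that φ ≡ c₁ and ψ ≡ c₂ on Ω. -/
/-!
Write the hypothesis as `conj φ · φ - r · conj ψ · ψ = s`. Its `∂`-derivative gives
`conj φ · φ' = r · conj ψ · ψ'`, and the `∂̄`-derivative of that identity gives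
`|φ'|² = r |ψ'|²`. Taking squared moduli in the first identity and substituting the other two
leaves `s r |ψ'|² = 0`, so `ψ' = 0`, hence `φ' = 0`, and both functions are constant on the
connected open set.
-/

open Topology ComplexConjugate

theorem exists_hasFDerivAt_conj_mul {f g : ℂ → ℂ} {f' g' z : ℂ} (hf : HasDerivAt f f' z)
    (hg : HasDerivAt g g' z) :
    ∃ L : ℂ →L[ℝ] ℂ, HasFDerivAt (fun w => conj (f w) * g w) L z ∧
      ∀ v, L v = conj (v * f') * g z + conj (f z) * (v * g') := by
  have hconj := (Complex.conjCLE.hasFDerivAt (x := f z)).comp z (hf.hasFDerivAt.restrictScalars ℝ)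
  refine ⟨_, hconj.mul (hg.hasFDerivAt.restrictScalars ℝ), fun v => ?_⟩
  simp only [add_apply, smul_apply,
    ContinuousLinearMap.comp_apply, ContinuousLinearMap.coe_restrictScalars',
    ContinuousLinearMap.toSpanSingleton_apply, ContinuousLinearEquiv.coe_coe,
    ContinuousAlgEquiv.coeCLE_apply, Complex.conjCAE_apply, Function.comp_apply, smul_eq_mul,
    map_mul]
  ring

theorem conj_mul_deriv_eq_of_eventually_eq {f₁ g₁ f₂ g₂ : ℂ → ℂ} {z c k : ℂ}
    (hf₁ : DifferentiableAt ℂ f₁ z) (hg₁ : DifferentiableAt ℂ g₁ z)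
    (hf₂ : DifferentiableAt ℂ f₂ z) (hg₂ : DifferentiableAt ℂ g₂ z)
    (hk : ∀ᶠ w in 𝓝 z, conj (f₁ w) * g₁ w - c * (conj (f₂ w) * g₂ w) = k) :
    conj (deriv f₁ z) * g₁ z = c * (conj (deriv f₂ z) * g₂ z) ∧
      conj (f₁ z) * deriv g₁ z = c * (conj (f₂ z) * deriv g₂ z) := by
  obtain ⟨L₁, hL₁, hL₁v⟩ := exists_hasFDerivAt_conj_mul hf₁.hasDerivAt hg₁.hasDerivAt
  obtain ⟨L₂, hL₂, hL₂v⟩ := exists_hasFDerivAt_conj_mul hf₂.hasDerivAt hg₂.hasDerivAt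
  have hL : L₁ - c • L₂ = 0 :=
    (hL₁.sub (hL₂.const_mul c)).unique ((hasFDerivAt_const k z).congr_of_eventuallyEq hk)
  -- `L₁ - c • L₂` is `v ↦ conj v * A + v * B`; testing `v = 1` and `v = I` separates `A` and `B`.
  have h1 := congrArg (· 1) hL
  have hI := congrArg (· Complex.I) hL
  simp only [sub_apply, smul_apply, hL₁v, hL₂v,
    zero_apply, smul_eq_mul, map_mul, Complex.conj_I, map_one] at h1 hI
  constructor
  · linear_combination (norm := ring_nf) (h1 + Complex.I * hI) / 2
    simp only [Complex.I_sq]; ring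
  · linear_combination (norm := ring_nf) (h1 - Complex.I * hI) / 2
    simp only [Complex.I_sq]; ring

section

variable {Ω : Set ℂ} {φ ψ : ℂ → ℂ} {r s : ℝ}

theorem conj_mul_deriv_eq_of_sq_norm_eq (hΩ : IsOpen Ω) (hφ : DifferentiableOn ℂ φ Ω)
    (hψ : DifferentiableOn ℂ ψ Ω) (H : ∀ z ∈ Ω, ‖φ z‖ ^ 2 = r * ‖ψ z‖ ^ 2 + s) {z : ℂ}
    (hz : z ∈ Ω) : conj (φ z) * deriv φ z = r * (conj (ψ z) * deriv ψ z) := by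
  have hφz := hφ.differentiableAt (hΩ.mem_nhds hz)
  have hψz := hψ.differentiableAt (hΩ.mem_nhds hz)
  have hconst : ∀ᶠ w in 𝓝 z, conj (φ w) * φ w - r * (conj (ψ w) * ψ w) = s := by
    filter_upwards [hΩ.mem_nhds hz] with w hw
    rw [Complex.conj_mul', Complex.conj_mul', ← Complex.ofReal_pow, ← Complex.ofReal_pow, H w hw]
    push_cast
    ring
  exact (conj_mul_deriv_eq_of_eventually_eq hφz hφz hψz hψz hconst).2

theorem sq_norm_deriv_eq_of_sq_norm_eq (hΩ : IsOpen Ω) (hφ : DifferentiableOn ℂ φ Ω)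
    (hψ : DifferentiableOn ℂ ψ Ω) (H : ∀ z ∈ Ω, ‖φ z‖ ^ 2 = r * ‖ψ z‖ ^ 2 + s) {z : ℂ}
    (hz : z ∈ Ω) : ‖deriv φ z‖ ^ 2 = r * ‖deriv ψ z‖ ^ 2 := by
  have hφ' := (hφ.analyticOnNhd hΩ).deriv.differentiableOn
  have hψ' := (hψ.analyticOnNhd hΩ).deriv.differentiableOn
  have hconst : ∀ᶠ w in 𝓝 z,
      conj (φ w) * deriv φ w - r * (conj (ψ w) * deriv ψ w) = 0 := by
    filter_upwards [hΩ.mem_nhds hz] with w hw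
    rw [conj_mul_deriv_eq_of_sq_norm_eq hΩ hφ hψ H hw, sub_self]
  have key := (conj_mul_deriv_eq_of_eventually_eq (hφ.differentiableAt (hΩ.mem_nhds hz))
    (hφ'.differentiableAt (hΩ.mem_nhds hz)) (hψ.differentiableAt (hΩ.mem_nhds hz))
    (hψ'.differentiableAt (hΩ.mem_nhds hz)) hconst).1
  rw [Complex.conj_mul', Complex.conj_mul'] at key
  exact_mod_cast key

theorem deriv_eq_zero_of_sq_norm_eq (hΩ : IsOpen Ω) (hφ : DifferentiableOn ℂ φ Ω)
    (hψ : DifferentiableOn ℂ ψ Ω) (hr : r ≠ 0) (hs : s ≠ 0)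
    (H : ∀ z ∈ Ω, ‖φ z‖ ^ 2 = r * ‖ψ z‖ ^ 2 + s) {z : ℂ} (hz : z ∈ Ω) :
    deriv φ z = 0 ∧ deriv ψ z = 0 := by
  have h₀ := H z hz
  have h₁ : ‖φ z‖ ^ 2 * ‖deriv φ z‖ ^ 2 = r ^ 2 * (‖ψ z‖ ^ 2 * ‖deriv ψ z‖ ^ 2) := by
    have := congrArg (‖·‖ ^ 2) (conj_mul_deriv_eq_of_sq_norm_eq hΩ hφ hψ H hz)
    simp only [norm_mul, Complex.norm_conj, Complex.norm_real, Real.norm_eq_abs] at this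
    rw [← sq_abs r]
    linear_combination this
  have h₂ := sq_norm_deriv_eq_of_sq_norm_eq hΩ hφ hψ H hz
  have hψ' : ‖deriv ψ z‖ ^ 2 = 0 := by
    have : s * r * ‖deriv ψ z‖ ^ 2 = 0 := by
      linear_combination h₁ - ‖φ z‖ ^ 2 * h₂ - r * ‖deriv ψ z‖ ^ 2 * h₀
    simpa [hr, hs] using this
  rw [hψ', mul_zero] at h₂
  exact ⟨by simpa using h₂, by simpa using hψ'⟩

end

theorem stmt_0_general (Ω : Set ℂ) (hΩo : IsOpen Ω) (hΩc : IsConnected Ω)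
    (φ ψ : ℂ → ℂ) (hφ : DifferentiableOn ℂ φ Ω) (hψ : DifferentiableOn ℂ ψ Ω)
    (r s : ℝ) (hr : r ≠ 0) (hs : s ≠ 0) :
    (∀ z ∈ Ω, ‖φ z‖ ^ 2 = r * ‖ψ z‖ ^ 2 + s) ↔
      ∃ c₁ c₂ : ℂ, ‖c₁‖ ^ 2 = r * ‖c₂‖ ^ 2 + s ∧
        (∀ z ∈ Ω, φ z = c₁) ∧ (∀ z ∈ Ω, ψ z = c₂) := by
  constructor
  · intro H
    have hderiv z (hz : z ∈ Ω) := deriv_eq_zero_of_sq_norm_eq hΩo hφ hψ hr hs H hz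
    obtain ⟨c₁, hc₁⟩ := hΩo.exists_is_const_of_deriv_eq_zero hΩc.isPreconnected hφ
      fun z hz => (hderiv z hz).1
    obtain ⟨c₂, hc₂⟩ := hΩo.exists_is_const_of_deriv_eq_zero hΩc.isPreconnected hψ
      fun z hz => (hderiv z hz).2
    obtain ⟨z₀, hz₀⟩ := hΩc.nonempty
    refine ⟨c₁, c₂, ?_, hc₁, hc₂⟩
    rw [← hc₁ z₀ hz₀, ← hc₂ z₀ hz₀]
    exact H z₀ hz₀
  · rintro ⟨c₁, c₂, hc, hφc, hψc⟩ z hz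
    rw [hφc z hz, hψc z hz, hc]

/-- **Lemma 1 (equal-modulus lemma).** If `φ, ψ` are holomorphic on a simply connected
domain `Ω ⊆ ℂ`, `φ` is not identically zero, and `r, s` are nonzero reals, then
`|φ|² = r|ψ|² + s` on `Ω` iff `φ` and `ψ` are constants `c₁, c₂` with `|c₁|² = r|c₂|² + s`. -/
theorem stmt_0 (Ω : Set ℂ) (hΩne : Ω.Nonempty) (hΩo : IsOpen Ω) (hΩc : IsConnected Ω)
    (hΩsc : SimplyConnectedSpace Ω)
    (φ ψ : ℂ → ℂ) (hφ : DifferentiableOn ℂ φ Ω) (hψ : DifferentiableOn ℂ ψ Ω)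
    (hφ0 : ∃ z ∈ Ω, φ z ≠ 0)
    (r s : ℝ) (hr : r ≠ 0) (hs : s ≠ 0) :
    (∀ z ∈ Ω, ‖φ z‖ ^ 2 = r * ‖ψ z‖ ^ 2 + s) ↔
      ∃ c₁ c₂ : ℂ, ‖c₁‖ ^ 2 = r * ‖c₂‖ ^ 2 + s ∧
        (∀ z ∈ Ω, φ z = c₁) ∧ (∀ z ∈ Ω, ψ z = c₂) :=
  stmt_0_general Ω hΩo hΩc φ ψ hφ hψ r s hr hs
end

section
/- Let F₁ + conj(G₁) be a sense preserving harmonic mapping on a simply connected domain Ω ⊆ ℂ such that G₁' = λ·F₁' for some constant λ ∈ ℂ, and let F₂ + conj(G₂) be a harmonic mapping on Ω whose Jacobian equals that of F₁ + conj(G₁), i.e. |F₁'(z)|² − |G₁'(z)|² = |F₂'(z)|² − |G₂'(z)|² for all z ∈ Ω. Then there exist constants α, β ∈ ℂ such that F₂' = α·F₁' and G₂' = β·F₁' on Ω, with |α|² − |β|² = 1 − |λ|² > 0. -/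
open Set ComplexConjugate

/-!
Dividing by `F₁'`, which cannot vanish, the quotients `u = F₂'/F₁'` and `v = G₂'/F₁'` are
holomorphic with `|u|² − |v|² = c := 1 − |λ|² > 0`. Such a pair is constant: with
`w = v(z₀)/u(z₀)` for a point `z₀`, the identity `|u − w̄ v|² = (1 − |w|²) c + |w u − v|²`
shows that the nonvanishing function `u − w̄ v` attains its minimum modulus at `z₀`, so it is
constant; hence `v = w u`, so `|u|` is constant, and by the maximum modulus principle so is `u`.
-/

namespace Complex

variable {E : Type*} [NormedAddCommGroup E] [NormedSpace ℂ E]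

theorem sq_norm_sub_conj_mul (u v w : ℂ) :
    ‖u - conj w * v‖ ^ 2 = (1 - ‖w‖ ^ 2) * (‖u‖ ^ 2 - ‖v‖ ^ 2) + ‖w * u - v‖ ^ 2 := by
  simp only [Complex.sq_norm, normSq_apply, sub_re, sub_im, mul_re, mul_im, conj_re, conj_im]
  ring

theorem eqOn_of_isPreconnected_of_isMinOn_norm {f : E → ℂ} {U : Set E} {c : E}
    (hc : IsPreconnected U) (ho : IsOpen U) (hd : DifferentiableOn ℂ f U)
    (hf : ∀ z ∈ U, f z ≠ 0) (hcU : c ∈ U) (hm : IsMinOn (norm ∘ f) U c) :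
    EqOn f (Function.const E (f c)) U := by
  have hmax : IsMaxOn (norm ∘ fun z => (f z)⁻¹) U c := fun z hz => by
    simpa only [mem_ofPred_eq, Function.comp_apply, norm_inv] using
      inv_anti₀ (norm_pos_iff.2 (hf c hcU)) (hm hz)
  intro z hz
  exact inv_injective (eqOn_of_isPreconnected_of_isMaxOn_norm hc ho (hd.inv hf) hcU hmax hz)

section SqNormSubSqNormEq

variable {u v : E → ℂ} {U : Set E} {c : ℝ} {z₀ : E}

theorem eq_mul_of_sq_norm_sub_sq_norm_eq (hU : IsPreconnected U) (ho : IsOpen U)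
    (hu : DifferentiableOn ℂ u U) (hv : DifferentiableOn ℂ v U) (hc : 0 < c)
    (huv : ∀ z ∈ U, ‖u z‖ ^ 2 - ‖v z‖ ^ 2 = c) (hz₀ : z₀ ∈ U) :
    ∀ z ∈ U, v z = v z₀ / u z₀ * u z := by
  set w := v z₀ / u z₀
  have hu₀ : u z₀ ≠ 0 := by
    intro h
    have := huv z₀ hz₀
    rw [h, norm_zero] at this
    nlinarith [sq_nonneg ‖v z₀‖]
  have hw : 0 < 1 - ‖w‖ ^ 2 := by
    have : (1 - ‖w‖ ^ 2) * ‖u z₀‖ ^ 2 = c := by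
      rw [norm_div, div_pow, ← huv z₀ hz₀]
      field_simp
    exact pos_of_mul_pos_left (this ▸ hc) (sq_nonneg _)
  set g := fun z => u z - conj w * v z
  have hg : ∀ z ∈ U, ‖g z‖ ^ 2 = (1 - ‖w‖ ^ 2) * c + ‖w * u z - v z‖ ^ 2 := fun z hz => by
    rw [sq_norm_sub_conj_mul, huv z hz]
  have hg₀ : ‖g z₀‖ ^ 2 = (1 - ‖w‖ ^ 2) * c := by
    rw [hg z₀ hz₀, div_mul_cancel₀ _ hu₀, sub_self, norm_zero]
    ring
  have hg_ne : ∀ z ∈ U, g z ≠ 0 := fun z hz h => by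
    have := hg z hz
    rw [h, norm_zero] at this
    nlinarith [mul_pos hw hc, sq_nonneg ‖w * u z - v z‖]
  have hg_min : IsMinOn (norm ∘ g) U z₀ := fun z hz => by
    refine pow_le_pow_iff_left₀ (norm_nonneg _) (norm_nonneg _) two_ne_zero |>.1 ?_
    rw [hg₀, hg z hz]
    exact le_add_of_nonneg_right (sq_nonneg _)
  have hg_const : EqOn g (Function.const E (g z₀)) U := eqOn_of_isPreconnected_of_isMinOn_norm hU ho
    (hu.sub ((differentiableOn_const _).mul hv)) hg_ne hz₀ hg_min
  intro z hz
  have : ‖w * u z - v z‖ ^ 2 = 0 := by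
    have := hg z hz
    rw [hg_const hz, Function.const_apply, hg₀] at this
    linarith
  exact (sub_eq_zero.1 (norm_eq_zero.1 (pow_eq_zero_iff two_ne_zero |>.1 this))).symm

theorem eqOn_const_of_sq_norm_sub_sq_norm_eq (hU : IsPreconnected U) (ho : IsOpen U)
    (hu : DifferentiableOn ℂ u U) (hv : DifferentiableOn ℂ v U) (hc : 0 < c)
    (huv : ∀ z ∈ U, ‖u z‖ ^ 2 - ‖v z‖ ^ 2 = c) (hz₀ : z₀ ∈ U) :
    EqOn u (Function.const E (u z₀)) U ∧ EqOn v (Function.const E (v z₀)) U := by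
  have hvu := eq_mul_of_sq_norm_sub_sq_norm_eq hU ho hu hv hc huv hz₀
  have hnorm : ∀ z ∈ U, ‖u z‖ ^ 2 * (1 - ‖v z₀ / u z₀‖ ^ 2) = c := fun z hz => by
    rw [← huv z hz, hvu z hz, norm_mul]
    ring
  have hu_max : IsMaxOn (norm ∘ u) U z₀ := fun z hz => by
    have hpos : 0 < 1 - ‖v z₀ / u z₀‖ ^ 2 :=
      pos_of_mul_pos_right (hnorm z hz ▸ hc) (sq_nonneg _)
    have := (mul_left_inj' hpos.ne').1 ((hnorm z hz).trans (hnorm z₀ hz₀).symm)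
    exact ((pow_left_inj₀ (norm_nonneg _) (norm_nonneg _) two_ne_zero).1 this).le
  have hu_const := eqOn_of_isPreconnected_of_isMaxOn_norm hU ho hu hz₀ hu_max
  refine ⟨hu_const, fun z hz => ?_⟩
  calc v z = v z₀ / u z₀ * u z := hvu z hz
    _ = v z₀ / u z₀ * u z₀ := by rw [hu_const hz, Function.const_apply]
    _ = v z₀ := (hvu z₀ hz₀).symm

end SqNormSubSqNormEq

end Complex

theorem stmt_1_general (Ω : Set ℂ) (hΩne : Ω.Nonempty) (hΩo : IsOpen Ω) (hΩc : IsConnected Ω)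
    (F₁ G₁ F₂ G₂ : ℂ → ℂ)
    (hF₁ : DifferentiableOn ℂ F₁ Ω)
    (hF₂ : DifferentiableOn ℂ F₂ Ω) (hG₂ : DifferentiableOn ℂ G₂ Ω)
    (hsp : ∀ z ∈ Ω, 0 < ‖deriv F₁ z‖ ^ 2 - ‖deriv G₁ z‖ ^ 2)
    (lam : ℂ) (hlam : ∀ z ∈ Ω, deriv G₁ z = lam * deriv F₁ z)
    (hJ : ∀ z ∈ Ω, ‖deriv F₁ z‖ ^ 2 - ‖deriv G₁ z‖ ^ 2
        = ‖deriv F₂ z‖ ^ 2 - ‖deriv G₂ z‖ ^ 2) :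
    ∃ α β : ℂ, (∀ z ∈ Ω, deriv F₂ z = α * deriv F₁ z ∧ deriv G₂ z = β * deriv F₁ z) ∧
      ‖α‖ ^ 2 - ‖β‖ ^ 2 = 1 - ‖lam‖ ^ 2 ∧ 0 < 1 - ‖lam‖ ^ 2 := by
  obtain ⟨z₀, hz₀⟩ := hΩne
  have hJ₁ : ∀ z ∈ Ω, ‖deriv F₁ z‖ ^ 2 - ‖deriv G₁ z‖ ^ 2 = (1 - ‖lam‖ ^ 2) * ‖deriv F₁ z‖ ^ 2 :=
    fun z hz => by rw [hlam z hz, norm_mul]; ring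
  have hc : 0 < 1 - ‖lam‖ ^ 2 :=
    pos_of_mul_pos_left (hJ₁ z₀ hz₀ ▸ hsp z₀ hz₀) (sq_nonneg _)
  have hF₁' : ∀ z ∈ Ω, deriv F₁ z ≠ 0 := fun z hz h => by
    simpa [h] using (hJ₁ z hz ▸ hsp z hz :)
  set u := fun z => deriv F₂ z / deriv F₁ z
  set v := fun z => deriv G₂ z / deriv F₁ z
  have huv : ∀ z ∈ Ω, ‖u z‖ ^ 2 - ‖v z‖ ^ 2 = 1 - ‖lam‖ ^ 2 := fun z hz => by
    have := norm_pos_iff.2 (hF₁' z hz)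
    simp only [u, v, norm_div, div_pow, ← sub_div, ← hJ z hz, hJ₁ z hz]
    field_simp
  obtain ⟨hu, hv⟩ := Complex.eqOn_const_of_sq_norm_sub_sq_norm_eq (u := u) (v := v)
    hΩc.isPreconnected hΩo
    (hF₂.deriv hΩo |>.div (hF₁.deriv hΩo) hF₁') (hG₂.deriv hΩo |>.div (hF₁.deriv hΩo) hF₁')
    hc huv hz₀
  refine ⟨u z₀, v z₀, fun z hz => ⟨?_, ?_⟩, huv z₀ hz₀, hc⟩
  · calc deriv F₂ z = u z * deriv F₁ z := (div_mul_cancel₀ _ (hF₁' z hz)).symm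
      _ = u z₀ * deriv F₁ z := by rw [hu hz, Function.const_apply]
  · calc deriv G₂ z = v z * deriv F₁ z := (div_mul_cancel₀ _ (hF₁' z hz)).symm
      _ = v z₀ * deriv F₁ z := by rw [hv hz, Function.const_apply]

/-- **Theorem (linearly dependent case, equal Jacobians).** If `F₁ + conj G₁` is a sense
preserving harmonic map on a simply connected domain `Ω ⊆ ℂ` with `G₁' = λ F₁'`, and
`F₂ + conj G₂` is a harmonic map on `Ω` with the same Jacobian, then `F₂' = α F₁'` and
`G₂' = β F₁'` for constants `α, β` with `|α|² − |β|² = 1 − |λ|² > 0`. -/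
theorem stmt_1 (Ω : Set ℂ) (hΩne : Ω.Nonempty) (hΩo : IsOpen Ω) (hΩc : IsConnected Ω)
    (hΩsc : SimplyConnectedSpace Ω)
    (F₁ G₁ F₂ G₂ : ℂ → ℂ)
    (hF₁ : DifferentiableOn ℂ F₁ Ω) (hG₁ : DifferentiableOn ℂ G₁ Ω)
    (hF₂ : DifferentiableOn ℂ F₂ Ω) (hG₂ : DifferentiableOn ℂ G₂ Ω)
    (hsp : ∀ z ∈ Ω, 0 < ‖deriv F₁ z‖ ^ 2 - ‖deriv G₁ z‖ ^ 2)
    (lam : ℂ) (hlam : ∀ z ∈ Ω, deriv G₁ z = lam * deriv F₁ z)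
    (hJ : ∀ z ∈ Ω, ‖deriv F₁ z‖ ^ 2 - ‖deriv G₁ z‖ ^ 2
        = ‖deriv F₂ z‖ ^ 2 - ‖deriv G₂ z‖ ^ 2) :
    ∃ α β : ℂ, (∀ z ∈ Ω, deriv F₂ z = α * deriv F₁ z ∧ deriv G₂ z = β * deriv F₁ z) ∧
      ‖α‖ ^ 2 - ‖β‖ ^ 2 = 1 - ‖lam‖ ^ 2 ∧ 0 < 1 - ‖lam‖ ^ 2 :=
  stmt_1_general Ω hΩne hΩo hΩc F₁ G₁ F₂ G₂ hF₁ hF₂ hG₂ hsp lam hlam hJ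
end

section
/- Let F₁ + conj(G₁) be a sense preserving harmonic mapping on a simply connected domain Ω ⊆ ℂ such that G₁' = λ·F₁' for some constant λ ∈ ℂ, and let F₂ + conj(G₂) be a harmonic mapping on Ω whose Jacobian equals that of F₁ + conj(G₁). If F₁ + conj(G₁) is univalent (injective) on Ω, then F₂ + conj(G₂) is univalent on Ω. -/
/-!
Since `G₁' = λ F₁'`, the Jacobian of `F₁ + conj G₁` is `(1 - |λ|²) |F₁'|²`, so `|λ| < 1` and
`F₁'` has no zeros. With `μ = √(1 - |λ|²)` the equality of Jacobians reads
`|F₂'|² = |G₂'|² + |μ F₁'|²`, so `(G₂' / F₂', μ F₁' / F₂')` is a holomorphic map into `ℂ²` of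
constant norm `1`, hence constant by the maximum modulus principle. Thus `G₂' = ω F₂'` with
`|ω| < 1` and `F₁' = c F₂'`, so up to additive constants `G₂ = ω F₂` and `F₁ = c F₂`. Now
`F₂ + conj G₂` is `F₂` followed by the injective map `u ↦ u + conj (ω u)`, and `F₂ z = F₂ z'`
forces `F₁ z = F₁ z'` and `G₁ z = G₁ z'`, hence `z = z'` by univalence of `F₁ + conj G₁`.
-/

theorem sub_const_mul_eq_of_deriv_eq {𝕜 : Type*} [RCLike 𝕜] {s : Set 𝕜} (hs : IsOpen s)
    (hs' : IsPreconnected s) {f g : 𝕜 → 𝕜} {c : 𝕜} (hf : DifferentiableOn 𝕜 f s)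
    (hg : DifferentiableOn 𝕜 g s) (hfg : ∀ z ∈ s, deriv g z = c * deriv f z)
    {z z' : 𝕜} (hz : z ∈ s) (hz' : z' ∈ s) : g z - c * f z = g z' - c * f z' := by
  refine hs.is_const_of_deriv_eq_zero hs' (f := fun x => g x - c * f x)
    (hg.sub (hf.const_mul c)) (fun x hx => ?_) hz hz'
  have hfx := hf.differentiableAt (hs.mem_nhds hx)
  have hgx := hg.differentiableAt (hs.mem_nhds hx)
  simp [deriv_fun_sub hgx (hfx.const_mul c), deriv_const_mul c hfx, hfg x hx]

theorem eqOn_of_norm_sq_add_norm_sq_eq {Ω : Set ℂ} (hΩo : IsOpen Ω) (hΩc : IsPreconnected Ω)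
    {p q : ℂ → ℂ} (hp : DifferentiableOn ℂ p Ω) (hq : DifferentiableOn ℂ q Ω) {c : ℝ}
    (hpq : ∀ z ∈ Ω, ‖p z‖ ^ 2 + ‖q z‖ ^ 2 = c)
    {z₀ : ℂ} (hz₀ : z₀ ∈ Ω) : ∀ z ∈ Ω, p z = p z₀ ∧ q z = q z₀ := by
  set Φ : ℂ → EuclideanSpace ℂ (Fin 2) :=
    fun z => (EuclideanSpace.equiv (Fin 2) ℂ).symm ![p z, q z]
  have hΦ : DifferentiableOn ℂ Φ Ω :=
    (EuclideanSpace.equiv (Fin 2) ℂ).symm.differentiable.comp_differentiableOn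
      (differentiableOn_pi.2 (Fin.forall_fin_two.2 ⟨hp, hq⟩))
  have hΦnorm : ∀ z ∈ Ω, ‖Φ z‖ ^ 2 = c := fun z hz => by
    simpa [Φ, PiLp.norm_sq_eq_of_L2, Fin.sum_univ_two] using hpq z hz
  have hmax : IsMaxOn (norm ∘ Φ) Ω z₀ := fun z hz =>
    ((pow_left_inj₀ (norm_nonneg _) (norm_nonneg _) two_ne_zero).1
      ((hΦnorm z hz).trans (hΦnorm z₀ hz₀).symm)).le
  intro z hz
  have h := Complex.eqOn_of_isPreconnected_of_isMaxOn_norm hΩc hΩo hΦ hz₀ hmax hz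
  exact ⟨by simpa [Φ] using congrArg (· 0) h, by simpa [Φ] using congrArg (· 1) h⟩

theorem exists_eq_mul_of_norm_sq_eq_add_norm_sq {Ω : Set ℂ} (hΩo : IsOpen Ω)
    (hΩc : IsPreconnected Ω) {f g h : ℂ → ℂ} (hf : DifferentiableOn ℂ f Ω)
    (hg : DifferentiableOn ℂ g Ω) (hh : DifferentiableOn ℂ h Ω) (hh0 : ∀ z ∈ Ω, h z ≠ 0)
    (hfgh : ∀ z ∈ Ω, ‖f z‖ ^ 2 = ‖g z‖ ^ 2 + ‖h z‖ ^ 2) {z₀ : ℂ} (hz₀ : z₀ ∈ Ω) :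
    ∃ a b : ℂ, ‖a‖ < 1 ∧ ∀ z ∈ Ω, g z = a * f z ∧ h z = b * f z := by
  have hf0 : ∀ z ∈ Ω, f z ≠ 0 := fun z hz h0 => by
    have hfgh' := hfgh z hz
    rw [h0, norm_zero] at hfgh'
    have := norm_pos_iff.2 (hh0 z hz)
    nlinarith [sq_nonneg ‖g z‖]
  have hpq : ∀ z ∈ Ω, ‖g z / f z‖ ^ 2 + ‖h z / f z‖ ^ 2 = 1 := fun z hz => by
    have := norm_pos_iff.2 (hf0 z hz)
    rw [norm_div, norm_div, div_pow, div_pow, ← add_div, ← hfgh z hz, div_self (by positivity)]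
  have hconst := eqOn_of_norm_sq_add_norm_sq_eq hΩo hΩc (hg.div hf hf0) (hh.div hf hf0) hpq hz₀
  refine ⟨g z₀ / f z₀, h z₀ / f z₀, ?_, fun z hz => ?_⟩
  · have := norm_pos_iff.2 (div_ne_zero (hh0 z₀ hz₀) (hf0 z₀ hz₀))
    have := hpq z₀ hz₀
    nlinarith [norm_nonneg (g z₀ / f z₀)]
  · exact ⟨(div_eq_iff (hf0 z hz)).1 (hconst z hz).1, (div_eq_iff (hf0 z hz)).1 (hconst z hz).2⟩

theorem add_conj_mul_injective {w : ℂ} (hw : ‖w‖ < 1) :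
    Function.Injective fun u : ℂ => u + starRingEnd ℂ (w * u) := by
  intro u v huv
  by_contra hne
  have hd : u - v = -starRingEnd ℂ (w * (u - v)) := by
    simp only [map_mul, map_sub] at huv ⊢
    linear_combination huv
  have hnorm : ‖u - v‖ = ‖w‖ * ‖u - v‖ := by
    conv_lhs => rw [hd, norm_neg, Complex.norm_conj, norm_mul]
  have := norm_pos_iff.2 (sub_ne_zero.2 hne)
  nlinarith

theorem exists_norm_mul_sq_eq_norm_sq_sub {lam x : ℂ} (hx : 0 < ‖x‖ ^ 2 - ‖lam * x‖ ^ 2) :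
    ∃ μ : ℂ, μ ≠ 0 ∧ ∀ y : ℂ, ‖μ * y‖ ^ 2 = ‖y‖ ^ 2 - ‖lam * y‖ ^ 2 := by
  have hlam : 0 < 1 - ‖lam‖ ^ 2 := by
    rw [norm_mul, mul_pow, ← one_sub_mul] at hx
    exact pos_of_mul_pos_left hx (by positivity)
  refine ⟨(√(1 - ‖lam‖ ^ 2) : ℝ), by exact_mod_cast (Real.sqrt_pos.2 hlam).ne', fun y => ?_⟩
  rw [norm_mul, norm_mul, mul_pow, mul_pow, Complex.norm_real, Real.norm_eq_abs, sq_abs,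
    Real.sq_sqrt hlam.le]
  ring

theorem stmt_2_general (Ω : Set ℂ) (hΩo : IsOpen Ω) (hΩc : IsConnected Ω)
    (F₁ G₁ F₂ G₂ : ℂ → ℂ)
    (hF₁ : DifferentiableOn ℂ F₁ Ω) (hG₁ : DifferentiableOn ℂ G₁ Ω)
    (hF₂ : DifferentiableOn ℂ F₂ Ω) (hG₂ : DifferentiableOn ℂ G₂ Ω)
    (hsp : ∀ z ∈ Ω, 0 < ‖deriv F₁ z‖ ^ 2 - ‖deriv G₁ z‖ ^ 2)
    (lam : ℂ) (hlam : ∀ z ∈ Ω, deriv G₁ z = lam * deriv F₁ z)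
    (hJ : ∀ z ∈ Ω, ‖deriv F₁ z‖ ^ 2 - ‖deriv G₁ z‖ ^ 2
        = ‖deriv F₂ z‖ ^ 2 - ‖deriv G₂ z‖ ^ 2)
    (huniv : Set.InjOn (fun z => F₁ z + (starRingEnd ℂ) (G₁ z)) Ω) :
    Set.InjOn (fun z => F₂ z + (starRingEnd ℂ) (G₂ z)) Ω := by
  intro z hz z' hz' hE
  have hΩpc := hΩc.isPreconnected
  obtain ⟨μ, hμ0, hμ⟩ := exists_norm_mul_sq_eq_norm_sq_sub (hlam z hz ▸ hsp z hz)
  have hμJ : ∀ ζ ∈ Ω, ‖μ * deriv F₁ ζ‖ ^ 2 = ‖deriv F₁ ζ‖ ^ 2 - ‖deriv G₁ ζ‖ ^ 2 :=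
    fun ζ hζ => by rw [hμ, hlam ζ hζ]
  have hμF₁ : ∀ ζ ∈ Ω, μ * deriv F₁ ζ ≠ 0 := fun ζ hζ h0 => by
    simpa [← hμJ ζ hζ, h0] using hsp ζ hζ
  obtain ⟨ω, b, hω, hωb⟩ := exists_eq_mul_of_norm_sq_eq_add_norm_sq hΩo hΩpc (hF₂.deriv hΩo)
    (hG₂.deriv hΩo) ((hF₁.deriv hΩo).const_mul μ) hμF₁
    (fun ζ hζ => by rw [hμJ ζ hζ, hJ ζ hζ]; ring) hz
  have hF₂z : F₂ z = F₂ z' := by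
    have h := sub_const_mul_eq_of_deriv_eq hΩo hΩpc hF₂ hG₂ (fun ζ hζ => (hωb ζ hζ).1) hz hz'
    apply add_conj_mul_injective hω
    have h' := congrArg (starRingEnd ℂ) h
    simp only [map_sub] at h' ⊢
    linear_combination hE - h'
  have hF₁z : F₁ z = F₁ z' := by
    have h := sub_const_mul_eq_of_deriv_eq hΩo hΩpc hF₂ hF₁ (c := μ⁻¹ * b)
      (fun ζ hζ => by rw [mul_assoc, ← (hωb ζ hζ).2, inv_mul_cancel_left₀ hμ0]) hz hz'
    linear_combination h + μ⁻¹ * b * hF₂z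
  have hG₁z : G₁ z = G₁ z' := by
    linear_combination sub_const_mul_eq_of_deriv_eq hΩo hΩpc hF₁ hG₁ hlam hz hz' + lam * hF₁z
  exact huniv hz hz' (by simp only [hF₁z, hG₁z])

/-- **Theorem (linearly dependent case, preservation of univalence).** If `F₁ + conj G₁`
is a sense preserving harmonic map on a simply connected domain `Ω ⊆ ℂ` with
`G₁' = λ F₁'`, `F₂ + conj G₂` is a harmonic map on `Ω` with the same Jacobian, and
`F₁ + conj G₁` is univalent on `Ω`, then `F₂ + conj G₂` is univalent on `Ω`. -/
theorem stmt_2 (Ω : Set ℂ) (hΩne : Ω.Nonempty) (hΩo : IsOpen Ω) (hΩc : IsConnected Ω)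
    (hΩsc : SimplyConnectedSpace Ω)
    (F₁ G₁ F₂ G₂ : ℂ → ℂ)
    (hF₁ : DifferentiableOn ℂ F₁ Ω) (hG₁ : DifferentiableOn ℂ G₁ Ω)
    (hF₂ : DifferentiableOn ℂ F₂ Ω) (hG₂ : DifferentiableOn ℂ G₂ Ω)
    (hsp : ∀ z ∈ Ω, 0 < ‖deriv F₁ z‖ ^ 2 - ‖deriv G₁ z‖ ^ 2)
    (lam : ℂ) (hlam : ∀ z ∈ Ω, deriv G₁ z = lam * deriv F₁ z)
    (hJ : ∀ z ∈ Ω, ‖deriv F₁ z‖ ^ 2 - ‖deriv G₁ z‖ ^ 2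
        = ‖deriv F₂ z‖ ^ 2 - ‖deriv G₂ z‖ ^ 2)
    (huniv : Set.InjOn (fun z => F₁ z + (starRingEnd ℂ) (G₁ z)) Ω) :
    Set.InjOn (fun z => F₂ z + (starRingEnd ℂ) (G₂ z)) Ω :=
  stmt_2_general Ω hΩo hΩc F₁ G₁ F₂ G₂ hF₁ hG₁ hF₂ hG₂ hsp lam hlam hJ huniv
end

section
/- Let F₁ + conj(G₁) and F₂ + conj(G₂) be two harmonic mappings on a simply connected domain Ω ⊆ ℂ, with Jacobians J₁ = |F₁'|² − |G₁'|² and J₂ = |F₂'|² − |G₂'|² respectively. Assume that F₁' and G₁' are linearly independent over ℂ. If J₁(z) = J₂(z) > 0 for all z ∈ Ω, then there exist complex constants α, β with |α|² = 1 + |β|² and a real number ξ such that F₂' = α·F₁' + β·e^{iξ}·G₁' and G₂' = conj(β)·F₁' + conj(α)·e^{iξ}·G₁' on Ω. -/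
/-!
If `∑ uᵢ conj vᵢ` vanishes on a domain, with `uᵢ, vᵢ` holomorphic, so does its
Wirtinger derivative `∑ uᵢ' conj vᵢ`, hence every `∑ uᵢ⁽ⁿ⁾ conj vᵢ`; by the identity theorem
`∑ uᵢ(z) conj vᵢ(w) = 0` for all `z, w`. Applied to the equal Jacobians this gives
`f₁(z) conj f₁(w) - g₁(z) conj g₁(w) = f₂(z) conj f₂(w) - g₂(z) conj g₂(w)` for the derivatives
`fᵢ = Fᵢ'`, `gᵢ = Gᵢ'`. Read as an identity of functions of `z`, it puts `f₁, g₁` in the span of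
`f₂, g₂`, so by a dimension count the two spans coincide and `(f₂, g₂) = M (f₁, g₁)` for a
constant matrix `M`. Comparing coefficients, which is legitimate because `f₁, g₁` are
independent, shows that `M` preserves the form `|x|² - |y|²`; such matrices are exactly
`[[α, β e^{iξ}], [conj β, conj α e^{iξ}]]` with `|α|² = 1 + |β|²`.
-/

open Set Complex ComplexConjugate Filter Topology Submodule

theorem HasDerivAt.hasFDerivAt_mul_conj {u v : ℂ → ℂ} {u' v' z : ℂ}
    (hu : HasDerivAt u u' z) (hv : HasDerivAt v v' z) :
    HasFDerivAt (fun y => u y * conj (v y))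
      ((u' * conj (v z)) • ContinuousLinearMap.id ℝ ℂ + (u z * conj v') • (conjCLE : ℂ →L[ℝ] ℂ))
      z := by
  refine ((hu.hasFDerivAt.restrictScalars ℝ).mul
    ((conjCLE : ℂ →L[ℝ] ℂ).hasFDerivAt.comp z (hv.hasFDerivAt.restrictScalars ℝ))).congr_fderiv ?_
  ext1 h
  simp only [add_apply, smul_apply, ContinuousLinearMap.id_apply, ContinuousLinearMap.comp_apply,
    ContinuousLinearMap.coe_restrictScalars', ContinuousLinearMap.toSpanSingleton_apply,
    ContinuousLinearEquiv.coe_coe, Function.comp_apply, conjCLE_apply, smul_eq_mul, map_mul]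
  ring

theorem eq_zero_of_smul_id_add_smul_conj_eq_zero {A C : ℂ}
    (h : A • ContinuousLinearMap.id ℝ ℂ + C • (conjCLE : ℂ →L[ℝ] ℂ) = 0) : A = 0 ∧ C = 0 := by
  have h₁ := DFunLike.congr_fun h 1
  have hI := DFunLike.congr_fun h I
  simp only [add_apply, smul_apply, ContinuousLinearMap.id_apply, ContinuousLinearEquiv.coe_coe,
    conjCLE_apply, conj_I, map_one, smul_eq_mul, zero_apply] at h₁ hI
  have hA : A = 0 := by linear_combination (h₁ - I * hI) / 2 + (A - C) / 2 * I_sq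
  exact ⟨hA, by linear_combination h₁ - hA⟩

section Polarization

variable {ι : Type*} [Fintype ι] {U : Set ℂ} {u v : ι → ℂ → ℂ}

theorem sum_deriv_mul_conj_eq_zero (hU : IsOpen U) (hu : ∀ i, DifferentiableOn ℂ (u i) U)
    (hv : ∀ i, DifferentiableOn ℂ (v i) U) (h : ∀ z ∈ U, ∑ i, u i z * conj (v i z) = 0) :
    ∀ z ∈ U, ∑ i, deriv (u i) z * conj (v i z) = 0 := by
  intro z hz
  have hderiv (w : ℂ → ℂ) (hw : DifferentiableOn ℂ w U) : HasDerivAt w (deriv w z) z :=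
    (hw.differentiableAt (hU.mem_nhds hz)).hasDerivAt
  have hsum := HasFDerivAt.fun_sum (u := Finset.univ) fun i _ =>
    (hderiv _ (hu i)).hasFDerivAt_mul_conj (hderiv _ (hv i))
  have hzero : HasFDerivAt (fun y => ∑ i, u i y * conj (v i y)) (0 : ℂ →L[ℝ] ℂ) z :=
    (hasFDerivAt_const 0 z).congr_of_eventuallyEq (eventually_of_mem (hU.mem_nhds hz) h)
  simp only [Finset.sum_add_distrib, ← Finset.sum_smul] at hsum
  exact (eq_zero_of_smul_id_add_smul_conj_eq_zero (hsum.unique hzero)).1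

theorem sum_iteratedDeriv_mul_conj_eq_zero (hU : IsOpen U) (hu : ∀ i, AnalyticOnNhd ℂ (u i) U)
    (hv : ∀ i, DifferentiableOn ℂ (v i) U) (h : ∀ z ∈ U, ∑ i, u i z * conj (v i z) = 0) (n : ℕ) :
    ∀ z ∈ U, ∑ i, iteratedDeriv n (u i) z * conj (v i z) = 0 := by
  induction n with
  | zero => simpa only [iteratedDeriv_zero] using h
  | succ n ih =>
    simp only [iteratedDeriv_succ]
    refine sum_deriv_mul_conj_eq_zero hU (fun i => ?_) hv ih
    rw [iteratedDeriv_eq_iterate]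
    exact ((hu i).iterated_deriv n).differentiableOn

theorem AnalyticAt.eventually_eq_zero_of_iteratedDeriv_eq_zero {𝕜 E : Type*}
    [NontriviallyNormedField 𝕜] [CharZero 𝕜] [NormedAddCommGroup E] [NormedSpace 𝕜 E]
    [CompleteSpace E] {f : 𝕜 → E} {x : 𝕜} (hf : AnalyticAt 𝕜 f x)
    (h : ∀ n, iteratedDeriv n f x = 0) : ∀ᶠ z in 𝓝 x, f z = 0 := by
  rw [← analyticOrderAt_eq_top, ENat.eq_top_iff_forall_ge]
  exact fun n => (natCast_le_analyticOrderAt_iff_iteratedDeriv_eq_zero hf).2 fun i _ => h i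

theorem sum_mul_conj_eq_zero_of_diag (hU : IsOpen U) (hU' : IsPreconnected U)
    (hu : ∀ i, AnalyticOnNhd ℂ (u i) U) (hv : ∀ i, DifferentiableOn ℂ (v i) U)
    (h : ∀ z ∈ U, ∑ i, u i z * conj (v i z) = 0) :
    ∀ z ∈ U, ∀ w ∈ U, ∑ i, u i z * conj (v i w) = 0 := by
  intro z hz w hw
  have hanalytic : AnalyticOnNhd ℂ (fun y => ∑ i, conj (v i w) * u i y) U :=
    Finset.analyticOnNhd_fun_sum _ fun i _ => analyticOnNhd_const.mul (hu i)
  have hiter (n : ℕ) : iteratedDeriv n (fun y => ∑ i, conj (v i w) * u i y) w = 0 := by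
    rw [iteratedDeriv_fun_sum (f := fun i y => conj (v i w) * u i y)
      fun i _ => (analyticAt_const.mul (hu i w hw)).contDiffAt]
    simp only [iteratedDeriv_const_mul_field]
    simpa only [mul_comm] using sum_iteratedDeriv_mul_conj_eq_zero hU hu hv h n w hw
  have := hanalytic.eqOn_zero_of_preconnected_of_eventuallyEq_zero hU' hw
    ((hanalytic w hw).eventually_eq_zero_of_iteratedDeriv_eq_zero hiter) hz
  simpa only [mul_comm, Pi.zero_apply] using this

end Polarization

theorem polarization_of_sq_norm_sub_eq {U : Set ℂ} (hU : IsOpen U) (hU' : IsPreconnected U)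
    {f₁ g₁ f₂ g₂ : ℂ → ℂ} (hf₁ : AnalyticOnNhd ℂ f₁ U) (hg₁ : AnalyticOnNhd ℂ g₁ U)
    (hf₂ : AnalyticOnNhd ℂ f₂ U) (hg₂ : AnalyticOnNhd ℂ g₂ U)
    (h : ∀ z ∈ U, ‖f₁ z‖ ^ 2 - ‖g₁ z‖ ^ 2 = ‖f₂ z‖ ^ 2 - ‖g₂ z‖ ^ 2) :
    ∀ z ∈ U, ∀ w ∈ U, f₁ z * conj (f₁ w) - g₁ z * conj (g₁ w)
      = f₂ z * conj (f₂ w) - g₂ z * conj (g₂ w) := by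
  have hpol := sum_mul_conj_eq_zero_of_diag (u := ![f₁, -g₁, -f₂, g₂]) (v := ![f₁, g₁, f₂, g₂])
    hU hU' (fun i => by fin_cases i <;> simp [hf₁, hg₁, hf₂, hg₂, AnalyticOnNhd.neg])
    (fun i => by fin_cases i <;> simp [hf₁.differentiableOn, hg₁.differentiableOn,
      hf₂.differentiableOn, hg₂.differentiableOn])
    fun z hz => by
      have := congrArg ((↑) : ℝ → ℂ) (h z hz)
      push_cast at this
      simp only [Fin.sum_univ_four, Matrix.cons_val, Pi.neg_apply, neg_mul, mul_conj']
      linear_combination this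
  intro z hz w hw
  have := hpol z hz w hw
  simp only [Fin.sum_univ_four, Matrix.cons_val, Pi.neg_apply, neg_mul] at this
  linear_combination this

theorem LinearIndependent.exists_mul_sub_mul_ne_zero {X K : Type*} [Field K] {f g : X → K}
    (h : LinearIndependent K ![f, g]) : ∃ w₁ w₂, f w₁ * g w₂ - g w₁ * f w₂ ≠ 0 := by
  by_contra! hdet
  obtain ⟨w₁, hw₁⟩ := Function.ne_iff.1 (h.ne_zero 0)
  have hdep : (-g w₁) • f + f w₁ • g = 0 := by
    funext w
    simp only [Pi.add_apply, Pi.smul_apply, smul_eq_mul, Pi.zero_apply]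
    linear_combination hdet w₁ w
  exact hw₁ (LinearIndependent.pair_iff.1 h _ _ hdep).2

theorem LinearIndependent.of_span_pair_le {K V : Type*} [Field K] [AddCommGroup V] [Module K V]
    {x y x' y' : V} (h : LinearIndependent K ![x, y])
    (hle : span K {x, y} ≤ span K {x', y'}) : LinearIndependent K ![x', y'] := by
  have : Module.Finite K (span K {x', y'}) := Module.Finite.span_of_finite K (toFinite _)
  have hxy := finrank_span_eq_card h
  rw [Matrix.range_cons_cons_empty] at hxy
  rw [linearIndependent_iff_card_le_finrank_span, Matrix.range_cons_cons_empty, Set.finrank,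
    ← hxy]
  exact Submodule.finrank_mono hle

section IndefiniteForm

variable {X : Type*} {f g : X → ℂ}

theorem LinearIndependent.span_pair_le_of_polarization (h : LinearIndependent ℂ ![f, g])
    {f' g' : X → ℂ} (hpol : ∀ z w, f z * conj (f w) - g z * conj (g w)
      = f' z * conj (f' w) - g' z * conj (g' w)) :
    span ℂ {f, g} ≤ span ℂ {f', g'} := by
  set S := span ℂ {f', g'}
  set e := fun w => conj (f w) • f - conj (g w) • g
  have he (w : X) : e w ∈ S := by
    have : e w = conj (f' w) • f' - conj (g' w) • g' := by
      funext z
      simpa only [e, Pi.sub_apply, Pi.smul_apply, smul_eq_mul, mul_comm] using hpol z w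
    rw [this]
    exact S.sub_mem (S.smul_mem _ (subset_span (mem_insert _ _)))
      (S.smul_mem _ (subset_span (mem_insert_of_mem _ rfl)))
  obtain ⟨w₁, w₂, hdet⟩ := h.exists_mul_sub_mul_ne_zero
  set Δ := conj (f w₁) * conj (g w₂) - conj (g w₁) * conj (f w₂)
  have hΔ : Δ ≠ 0 := by
    intro h0
    apply hdet
    simpa only [Δ, map_sub, map_mul, conj_conj, map_zero] using congrArg conj h0
  have hf : f = Δ⁻¹ • (conj (g w₂) • e w₁ - conj (g w₁) • e w₂) := by
    rw [eq_inv_smul_iff₀ hΔ]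
    funext x
    simp only [e, Δ, Pi.smul_apply, Pi.sub_apply, smul_eq_mul]
    ring
  have hg : g = Δ⁻¹ • (conj (f w₂) • e w₁ - conj (f w₁) • e w₂) := by
    rw [eq_inv_smul_iff₀ hΔ]
    funext x
    simp only [e, Δ, Pi.smul_apply, Pi.sub_apply, smul_eq_mul]
    ring
  rw [span_le, insert_subset_iff, singleton_subset_iff, hf, hg]
  exact ⟨S.smul_mem _ (S.sub_mem (S.smul_mem _ (he w₁)) (S.smul_mem _ (he w₂))),
    S.smul_mem _ (S.sub_mem (S.smul_mem _ (he w₁)) (S.smul_mem _ (he w₂)))⟩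

theorem LinearIndependent.eq_zero_of_sesquilinear_eq_zero (h : LinearIndependent ℂ ![f, g])
    {A B C D : ℂ} (hform : ∀ z w, A * f z * conj (f w) + B * f z * conj (g w)
      + C * g z * conj (f w) + D * g z * conj (g w) = 0) :
    A = 0 ∧ B = 0 ∧ C = 0 ∧ D = 0 := by
  have hind (s t : ℂ) (hst : ∀ z, s * f z + t * g z = 0) : s = 0 ∧ t = 0 :=
    LinearIndependent.pair_iff.1 h s t (funext fun z => by simpa using hst z)
  have hrow (w : X) := hind (A * conj (f w) + B * conj (g w)) (C * conj (f w) + D * conj (g w))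
    fun z => by linear_combination hform z w
  have hconj (s t : ℂ) (hst : ∀ w, s * conj (f w) + t * conj (g w) = 0) : s = 0 ∧ t = 0 := by
    have := hind (conj s) (conj t) fun w => by simpa using congrArg conj (hst w)
    simpa using this
  obtain ⟨hA, hB⟩ := hconj A B fun w => (hrow w).1
  obtain ⟨hC, hD⟩ := hconj C D fun w => (hrow w).2
  exact ⟨hA, hB, hC, hD⟩

end IndefiniteForm

theorem exists_phase_of_pseudoUnitary {a b c d : ℂ}
    (haa : ‖a‖ ^ 2 = 1 + ‖c‖ ^ 2) (hab : b * conj a = d * conj c)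
    (hdd : ‖d‖ ^ 2 = 1 + ‖b‖ ^ 2) :
    ∃ ξ : ℝ, b = conj c * exp (ξ * I) ∧ d = conj a * exp (ξ * I) := by
  have ha : conj a ≠ 0 := by
    rw [map_ne_zero, ← norm_ne_zero_iff]
    intro h0
    nlinarith [h0]
  set t := d / conj a
  have hd : d = conj a * t := (mul_div_cancel₀ d ha).symm
  have hb : b = conj c * t := by
    rw [mul_div_assoc', eq_div_iff ha]
    linear_combination hab
  have hbc : ‖b‖ ^ 2 = ‖c‖ ^ 2 := by
    have := congrArg (‖·‖ ^ 2) hab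
    simp only [norm_mul, norm_conj, mul_pow] at this
    linear_combination this - ‖b‖ ^ 2 * haa + ‖c‖ ^ 2 * hdd
  have ht : ‖t‖ = 1 := by
    have hda : ‖d‖ = ‖a‖ := by
      refine (pow_left_inj₀ (norm_nonneg _) (norm_nonneg _) two_ne_zero).1 ?_
      rw [hdd, haa, hbc]
    rw [norm_div, norm_conj, hda, div_self (norm_ne_zero_iff.2 ((map_ne_zero _).1 ha))]
  refine ⟨arg t, ?_, ?_⟩ <;>
    rw [← one_mul (exp _), ← ofReal_one, ← ht, norm_mul_exp_arg_mul_I] <;> assumption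

theorem exists_phase_of_polarization {X : Type*} {f₁ g₁ f₂ g₂ : X → ℂ}
    (hind : LinearIndependent ℂ ![f₁, g₁])
    (hpol : ∀ z w, f₁ z * conj (f₁ w) - g₁ z * conj (g₁ w)
      = f₂ z * conj (f₂ w) - g₂ z * conj (g₂ w)) :
    ∃ (α β : ℂ) (ξ : ℝ), ‖α‖ ^ 2 = 1 + ‖β‖ ^ 2 ∧ ∀ z,
      f₂ z = α * f₁ z + β * exp (ξ * I) * g₁ z ∧
      g₂ z = conj β * f₁ z + conj α * exp (ξ * I) * g₁ z := by
  have hind₂ := hind.of_span_pair_le (hind.span_pair_le_of_polarization hpol)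
  have hle := hind₂.span_pair_le_of_polarization fun z w => (hpol z w).symm
  obtain ⟨a, b, rfl⟩ := mem_span_pair.1 (hle (subset_span (mem_insert _ _)))
  obtain ⟨c, d, rfl⟩ := mem_span_pair.1 (hle (subset_span (mem_insert_of_mem _ rfl)))
  obtain ⟨hA, -, hC, hD⟩ := hind.eq_zero_of_sesquilinear_eq_zero
    (A := a * conj a - c * conj c - 1) (B := a * conj b - c * conj d)
    (C := b * conj a - d * conj c) (D := b * conj b - d * conj d + 1) fun z w => by
      have := hpol z w
      simp only [Pi.add_apply, Pi.smul_apply, smul_eq_mul, map_add, map_mul] at this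
      linear_combination -this
  rw [mul_conj', mul_conj'] at hA hD
  have haa : ‖a‖ ^ 2 = 1 + ‖c‖ ^ 2 := by
    exact_mod_cast (by linear_combination hA : (‖a‖ : ℂ) ^ 2 = 1 + (‖c‖ : ℂ) ^ 2)
  have hdd : ‖d‖ ^ 2 = 1 + ‖b‖ ^ 2 := by
    exact_mod_cast (by linear_combination -hD : (‖d‖ : ℂ) ^ 2 = 1 + (‖b‖ : ℂ) ^ 2)
  obtain ⟨ξ, hb, hd⟩ := exists_phase_of_pseudoUnitary haa (by linear_combination hC) hdd
  refine ⟨a, conj c, ξ, by rwa [norm_conj], fun z => ⟨?_, ?_⟩⟩ <;>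
    simp only [Pi.add_apply, Pi.smul_apply, smul_eq_mul, hb, hd, conj_conj]

theorem stmt_3_general (Ω : Set ℂ) (hΩo : IsOpen Ω) (hΩc : IsConnected Ω)
    (F₁ G₁ F₂ G₂ : ℂ → ℂ)
    (hF₁ : DifferentiableOn ℂ F₁ Ω) (hG₁ : DifferentiableOn ℂ G₁ Ω)
    (hF₂ : DifferentiableOn ℂ F₂ Ω) (hG₂ : DifferentiableOn ℂ G₂ Ω)
    (hindep : ¬ ∃ a b : ℂ, (a, b) ≠ (0, 0) ∧
      ∀ z ∈ Ω, a * deriv F₁ z + b * deriv G₁ z = 0)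
    (hJ : ∀ z ∈ Ω, ‖deriv F₁ z‖ ^ 2 - ‖deriv G₁ z‖ ^ 2
        = ‖deriv F₂ z‖ ^ 2 - ‖deriv G₂ z‖ ^ 2) :
    ∃ (α β : ℂ) (ξ : ℝ), ‖α‖ ^ 2 = 1 + ‖β‖ ^ 2 ∧
      ∀ z ∈ Ω,
        deriv F₂ z = α * deriv F₁ z + β * Complex.exp ((ξ : ℂ) * Complex.I) * deriv G₁ z ∧
        deriv G₂ z = (starRingEnd ℂ) β * deriv F₁ z
          + (starRingEnd ℂ) α * Complex.exp ((ξ : ℂ) * Complex.I) * deriv G₁ z := by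
  have hpol := polarization_of_sq_norm_sub_eq hΩo hΩc.isPreconnected
    (hF₁.analyticOnNhd hΩo).deriv (hG₁.analyticOnNhd hΩo).deriv
    (hF₂.analyticOnNhd hΩo).deriv (hG₂.analyticOnNhd hΩo).deriv hJ
  have hind : LinearIndependent ℂ ![fun z : Ω => deriv F₁ z, fun z : Ω => deriv G₁ z] := by
    refine LinearIndependent.pair_iff.2 fun s t hst => ?_
    by_contra hne
    refine hindep ⟨s, t, by simpa only [ne_eq, Prod.mk.injEq] using hne, fun z hz => ?_⟩
    simpa using congrFun hst ⟨z, hz⟩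
  obtain ⟨α, β, ξ, hαβ, h⟩ := exists_phase_of_polarization hind fun z w => hpol z z.2 w w.2
  exact ⟨α, β, ξ, hαβ, fun z hz => h ⟨z, hz⟩⟩

/-- **Theorem (linearly independent case, equal Jacobians).** If `F₁ + conj G₁` and
`F₂ + conj G₂` are harmonic maps on a simply connected domain `Ω ⊆ ℂ`, the derivatives
`F₁', G₁'` are linearly independent over `ℂ`, and the Jacobians coincide and are positive
on `Ω`, then there are constants `α, β ∈ ℂ` with `|α|² = 1 + |β|²` and `ξ ∈ ℝ` with
`F₂' = α F₁' + β e^{iξ} G₁'` and `G₂' = conj(β) F₁' + conj(α) e^{iξ} G₁'`. -/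
theorem stmt_3 (Ω : Set ℂ) (hΩne : Ω.Nonempty) (hΩo : IsOpen Ω) (hΩc : IsConnected Ω)
    (hΩsc : SimplyConnectedSpace Ω)
    (F₁ G₁ F₂ G₂ : ℂ → ℂ)
    (hF₁ : DifferentiableOn ℂ F₁ Ω) (hG₁ : DifferentiableOn ℂ G₁ Ω)
    (hF₂ : DifferentiableOn ℂ F₂ Ω) (hG₂ : DifferentiableOn ℂ G₂ Ω)
    (hindep : ¬ ∃ a b : ℂ, (a, b) ≠ (0, 0) ∧
      ∀ z ∈ Ω, a * deriv F₁ z + b * deriv G₁ z = 0)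
    (hJ : ∀ z ∈ Ω, ‖deriv F₁ z‖ ^ 2 - ‖deriv G₁ z‖ ^ 2
        = ‖deriv F₂ z‖ ^ 2 - ‖deriv G₂ z‖ ^ 2)
    (hJpos : ∀ z ∈ Ω, 0 < ‖deriv F₁ z‖ ^ 2 - ‖deriv G₁ z‖ ^ 2) :
    ∃ (α β : ℂ) (ξ : ℝ), ‖α‖ ^ 2 = 1 + ‖β‖ ^ 2 ∧
      ∀ z ∈ Ω,
        deriv F₂ z = α * deriv F₁ z + β * Complex.exp ((ξ : ℂ) * Complex.I) * deriv G₁ z ∧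
        deriv G₂ z = (starRingEnd ℂ) β * deriv F₁ z
          + (starRingEnd ℂ) α * Complex.exp ((ξ : ℂ) * Complex.I) * deriv G₁ z :=
  stmt_3_general Ω hΩo hΩc F₁ G₁ F₂ G₂ hF₁ hG₁ hF₂ hG₂ hindep hJ
end

section
/- Let Ω₀ ⊆ ℂ be a domain and let F, G : [0,∞) × Ω₀ → ℂ be such that F(t,·), G(t,·) are holomorphic on Ω₀ for each t and the time dependence of F, G and their z-derivatives is C². Define x(t;a,b) + i·y(t;a,b) = F(t,z) + conj(G(t,z)) with z = a + ib, and write f = ∂F/∂z, g = ∂G/∂z. Then the Euler compatibility equation ∂/∂t ( x_a·x_{bt} + y_a·y_{bt} − x_b·x_{at} − y_b·y_{at} ) = 0 holds on [0,∞) × Ω₀ if and only if ∂/∂t ( Im( f_t·conj(f) − g·conj(g_t) ) ) = 0 holds on [0,∞) × Ω₀. -/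
/-!
Holomorphy of `F(t,·)` and `G(t,·)` gives `x_a + i y_a = f + conj g` and `x_b + i y_b = i (f − conj g)`.
Writing `P = x_a + i y_a`, `Q = x_b + i y_b`, the Euler expression is `Re (P conj Q_t) − Re (Q conj P_t)`;
expanding, the `f conj g` cross terms cancel and it equals `−2 Im (f_t conj f − g conj g_t)` for every
`t ≥ 0`. The two time derivatives therefore differ by the nonzero factor `−2`.
-/

open Set

/-- The labelling map `(t,a,b) ↦ F(t, a+ib) + conj(G(t, a+ib))`. -/
noncomputable def labelMap (F G : ℝ → ℂ → ℂ) (t a b : ℝ) : ℂ :=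
  F t (Complex.mk a b) + (starRingEnd ℂ) (G t (Complex.mk a b))

/-- `x(t;a,b)`, the real part of the labelling map. -/
noncomputable def xLab (F G : ℝ → ℂ → ℂ) (t a b : ℝ) : ℝ := (labelMap F G t a b).re

/-- `y(t;a,b)`, the imaginary part of the labelling map. -/
noncomputable def yLab (F G : ℝ → ℂ → ℂ) (t a b : ℝ) : ℝ := (labelMap F G t a b).im

/-- `x_a`, the partial derivative of `x` in the label coordinate `a`. -/
noncomputable def xa (F G : ℝ → ℂ → ℂ) (t a b : ℝ) : ℝ :=
  deriv (fun a' => xLab F G t a' b) a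

/-- `x_b`, the partial derivative of `x` in the label coordinate `b`. -/
noncomputable def xb (F G : ℝ → ℂ → ℂ) (t a b : ℝ) : ℝ :=
  deriv (fun b' => xLab F G t a b') b

/-- `y_a`, the partial derivative of `y` in the label coordinate `a`. -/
noncomputable def ya (F G : ℝ → ℂ → ℂ) (t a b : ℝ) : ℝ :=
  deriv (fun a' => yLab F G t a' b) a

/-- `y_b`, the partial derivative of `y` in the label coordinate `b`. -/
noncomputable def yb (F G : ℝ → ℂ → ℂ) (t a b : ℝ) : ℝ :=
  deriv (fun b' => yLab F G t a b') b

/-- `x_{at}`, the time derivative (within `[0,∞)`) of `x_a`. -/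
noncomputable def xat (F G : ℝ → ℂ → ℂ) (t a b : ℝ) : ℝ :=
  derivWithin (fun s => xa F G s a b) (Ici 0) t

/-- `x_{bt}`, the time derivative (within `[0,∞)`) of `x_b`. -/
noncomputable def xbt (F G : ℝ → ℂ → ℂ) (t a b : ℝ) : ℝ :=
  derivWithin (fun s => xb F G s a b) (Ici 0) t

/-- `y_{at}`, the time derivative (within `[0,∞)`) of `y_a`. -/
noncomputable def yat (F G : ℝ → ℂ → ℂ) (t a b : ℝ) : ℝ :=
  derivWithin (fun s => ya F G s a b) (Ici 0) t

/-- `y_{bt}`, the time derivative (within `[0,∞)`) of `y_b`. -/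
noncomputable def ybt (F G : ℝ → ℂ → ℂ) (t a b : ℝ) : ℝ :=
  derivWithin (fun s => yb F G s a b) (Ici 0) t

/-- The quantity `x_a x_{bt} + y_a y_{bt} − x_b x_{at} − y_b y_{at}` appearing in the
Euler equation in Lagrangian variables. -/
noncomputable def eulerExpr (F G : ℝ → ℂ → ℂ) (t a b : ℝ) : ℝ :=
  xa F G t a b * xbt F G t a b + ya F G t a b * ybt F G t a b
    - xb F G t a b * xat F G t a b - yb F G t a b * yat F G t a b

open Complex ComplexConjugate

section ComplexParts

variable {f : ℝ → ℂ} {f' : ℂ} {s : Set ℝ} {t : ℝ}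

theorem HasDerivAt.re (h : HasDerivAt f f' t) : HasDerivAt (fun u => (f u).re) f'.re t :=
  reCLM.hasFDerivAt.comp_hasDerivAt t h

theorem HasDerivAt.im (h : HasDerivAt f f' t) : HasDerivAt (fun u => (f u).im) f'.im t :=
  imCLM.hasFDerivAt.comp_hasDerivAt t h

theorem HasDerivWithinAt.re (h : HasDerivWithinAt f f' s t) :
    HasDerivWithinAt (fun u => (f u).re) f'.re s t :=
  reCLM.hasFDerivAt.comp_hasDerivWithinAt t h

theorem HasDerivWithinAt.im (h : HasDerivWithinAt f f' s t) :
    HasDerivWithinAt (fun u => (f u).im) f'.im s t :=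
  imCLM.hasFDerivAt.comp_hasDerivWithinAt t h

end ComplexParts

theorem hasDerivAt_mk_re (a b : ℝ) : HasDerivAt (fun a' : ℝ => (⟨a', b⟩ : ℂ)) 1 a := by
  simp_rw [mk_eq_add_mul_I]
  simpa using (hasDerivAt_id a).ofReal_comp.add_const ((b : ℂ) * I)

theorem hasDerivAt_mk_im (a b : ℝ) : HasDerivAt (fun b' : ℝ => (⟨a, b'⟩ : ℂ)) I b := by
  simp_rw [mk_eq_add_mul_I]
  simpa using ((hasDerivAt_id b).ofReal_comp.mul_const I).const_add (a : ℂ)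

section LabelMap

variable {F G : ℝ → ℂ → ℂ} {t : ℝ} {z : ℂ}

theorem hasDerivAt_labelMap_a (hF : DifferentiableAt ℂ (F t) z) (hG : DifferentiableAt ℂ (G t) z) :
    HasDerivAt (fun a => labelMap F G t a z.im) (deriv (F t) z + conj (deriv (G t) z)) z.re := by
  have hF' := hF.hasDerivAt.comp_of_eq z.re (hasDerivAt_mk_re z.re z.im) (eta z).symm
  have hG' := hG.hasDerivAt.comp_of_eq z.re (hasDerivAt_mk_re z.re z.im) (eta z).symm
  exact (hF'.add hG'.star).congr_deriv (by simp)

theorem hasDerivAt_labelMap_b (hF : DifferentiableAt ℂ (F t) z) (hG : DifferentiableAt ℂ (G t) z) :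
    HasDerivAt (fun b => labelMap F G t z.re b)
      (I * (deriv (F t) z - conj (deriv (G t) z))) z.im := by
  have hF' := hF.hasDerivAt.comp_of_eq z.im (hasDerivAt_mk_im z.re z.im) (eta z).symm
  have hG' := hG.hasDerivAt.comp_of_eq z.im (hasDerivAt_mk_im z.re z.im) (eta z).symm
  refine (hF'.add hG'.star).congr_deriv ?_
  rw [star_mul', star_def, conj_I]
  ring

theorem xa_eq (hF : DifferentiableAt ℂ (F t) z) (hG : DifferentiableAt ℂ (G t) z) :
    xa F G t z.re z.im = (deriv (F t) z + conj (deriv (G t) z)).re :=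
  (hasDerivAt_labelMap_a hF hG).re.deriv

theorem ya_eq (hF : DifferentiableAt ℂ (F t) z) (hG : DifferentiableAt ℂ (G t) z) :
    ya F G t z.re z.im = (deriv (F t) z + conj (deriv (G t) z)).im :=
  (hasDerivAt_labelMap_a hF hG).im.deriv

theorem xb_eq (hF : DifferentiableAt ℂ (F t) z) (hG : DifferentiableAt ℂ (G t) z) :
    xb F G t z.re z.im = (I * (deriv (F t) z - conj (deriv (G t) z))).re :=
  (hasDerivAt_labelMap_b hF hG).re.deriv

theorem yb_eq (hF : DifferentiableAt ℂ (F t) z) (hG : DifferentiableAt ℂ (G t) z) :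
    yb F G t z.re z.im = (I * (deriv (F t) z - conj (deriv (G t) z))).im :=
  (hasDerivAt_labelMap_b hF hG).im.deriv

end LabelMap

theorem eulerExpr_eq_neg_two_mul_im {F G : ℝ → ℂ → ℂ} {t : ℝ} {z : ℂ}
    (hF : ∀ s ∈ Ici (0 : ℝ), DifferentiableAt ℂ (F s) z)
    (hG : ∀ s ∈ Ici (0 : ℝ), DifferentiableAt ℂ (G s) z)
    (hf : DifferentiableWithinAt ℝ (fun s => deriv (F s) z) (Ici 0) t)
    (hg : DifferentiableWithinAt ℝ (fun s => deriv (G s) z) (Ici 0) t) (ht : t ∈ Ici (0 : ℝ)) :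
    eulerExpr F G t z.re z.im =
      -2 * (derivWithin (fun s => deriv (F s) z) (Ici 0) t * conj (deriv (F t) z)
        - deriv (G t) z * conj (derivWithin (fun s => deriv (G s) z) (Ici 0) t)).im := by
  set f' := derivWithin (fun s => deriv (F s) z) (Ici 0) t
  set g' := derivWithin (fun s => deriv (G s) z) (Ici 0) t
  have hP : HasDerivWithinAt (fun s => deriv (F s) z + conj (deriv (G s) z)) (f' + conj g')
      (Ici 0) t :=
    hf.hasDerivWithinAt.add hg.hasDerivWithinAt.star
  have hQ : HasDerivWithinAt (fun s => I * (deriv (F s) z - conj (deriv (G s) z)))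
      (I * (f' - conj g')) (Ici 0) t :=
    (hf.hasDerivWithinAt.sub hg.hasDerivWithinAt.star).const_mul I
  have hu : UniqueDiffWithinAt ℝ (Ici (0 : ℝ)) t := uniqueDiffOn_Ici 0 t ht
  have hxat : xat F G t z.re z.im = (f' + conj g').re :=
    (hP.re.congr_of_mem (fun s hs => xa_eq (hF s hs) (hG s hs)) ht).derivWithin hu
  have hyat : yat F G t z.re z.im = (f' + conj g').im :=
    (hP.im.congr_of_mem (fun s hs => ya_eq (hF s hs) (hG s hs)) ht).derivWithin hu
  have hxbt : xbt F G t z.re z.im = (I * (f' - conj g')).re :=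
    (hQ.re.congr_of_mem (fun s hs => xb_eq (hF s hs) (hG s hs)) ht).derivWithin hu
  have hybt : ybt F G t z.re z.im = (I * (f' - conj g')).im :=
    (hQ.im.congr_of_mem (fun s hs => yb_eq (hF s hs) (hG s hs)) ht).derivWithin hu
  rw [eulerExpr, xa_eq (hF t ht) (hG t ht), ya_eq (hF t ht) (hG t ht), xb_eq (hF t ht) (hG t ht),
    yb_eq (hF t ht) (hG t ht), hxat, hyat, hxbt, hybt]
  simp only [add_re, add_im, sub_re, sub_im, mul_re, mul_im, I_re, I_im, conj_re, conj_im]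
  ring

theorem derivWithin_eulerExpr {F G : ℝ → ℂ → ℂ} {t : ℝ} {z : ℂ}
    (hF : ∀ s ∈ Ici (0 : ℝ), DifferentiableAt ℂ (F s) z)
    (hG : ∀ s ∈ Ici (0 : ℝ), DifferentiableAt ℂ (G s) z)
    (hf : DifferentiableOn ℝ (fun s => deriv (F s) z) (Ici 0))
    (hg : DifferentiableOn ℝ (fun s => deriv (G s) z) (Ici 0)) (ht : t ∈ Ici (0 : ℝ)) :
    derivWithin (fun s => eulerExpr F G s z.re z.im) (Ici 0) t =
      -2 * derivWithin (fun s =>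
        (derivWithin (fun u => deriv (F u) z) (Ici 0) s * conj (deriv (F s) z)
          - deriv (G s) z * conj (derivWithin (fun u => deriv (G u) z) (Ici 0) s)).im) (Ici 0) t := by
  have hEq : EqOn (fun s => eulerExpr F G s z.re z.im) _ (Ici 0) := fun s hs =>
    eulerExpr_eq_neg_two_mul_im hF hG (hf s hs) (hg s hs) hs
  rw [derivWithin_congr hEq (hEq ht), derivWithin_const_mul_field]

theorem stmt_5_general (Ω₀ : Set ℂ) (hΩo : IsOpen Ω₀)
    (F G : ℝ → ℂ → ℂ)
    (hF : ∀ t ∈ Ici (0:ℝ), DifferentiableOn ℂ (F t) Ω₀)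
    (hG : ∀ t ∈ Ici (0:ℝ), DifferentiableOn ℂ (G t) Ω₀)
    (hft : ∀ z ∈ Ω₀, ContDiffOn ℝ 2 (fun t => deriv (F t) z) (Ici 0))
    (hgt : ∀ z ∈ Ω₀, ContDiffOn ℝ 2 (fun t => deriv (G t) z) (Ici 0)) :
    (∀ t ∈ Ici (0:ℝ), ∀ z ∈ Ω₀,
        derivWithin (fun s => eulerExpr F G s z.re z.im) (Ici 0) t = 0)
      ↔ (∀ t ∈ Ici (0:ℝ), ∀ z ∈ Ω₀,
        derivWithin (fun s =>
          (derivWithin (fun u => deriv (F u) z) (Ici 0) s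
              * (starRingEnd ℂ) (deriv (F s) z)
            - deriv (G s) z
              * (starRingEnd ℂ) (derivWithin (fun u => deriv (G u) z) (Ici 0) s)).im)
          (Ici 0) t = 0) := by
  refine forall₂_congr fun t ht => forall₂_congr fun z hz => ?_
  have hFz s hs := (hF s hs).differentiableAt (hΩo.mem_nhds hz)
  have hGz s hs := (hG s hs).differentiableAt (hΩo.mem_nhds hz)
  rw [derivWithin_eulerExpr hFz hGz ((hft z hz).differentiableOn two_ne_zero)
    ((hgt z hz).differentiableOn two_ne_zero) ht, mul_eq_zero, or_iff_right (by norm_num)]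

/-- **Euler's equation in Lagrangian variables for harmonic labellings.** With
`f = ∂F/∂z`, `g = ∂G/∂z` (and time derivatives taken within `[0,∞)`), the Euler
compatibility equation `∂_t(x_a x_{bt} + y_a y_{bt} − x_b x_{at} − y_b y_{at}) = 0`
holds on `[0,∞) × Ω₀` iff `∂_t Im(f_t conj f − g conj g_t) = 0` holds there. -/
theorem stmt_5 (Ω₀ : Set ℂ) (hΩne : Ω₀.Nonempty) (hΩo : IsOpen Ω₀) (hΩc : IsConnected Ω₀)
    (F G : ℝ → ℂ → ℂ)
    (hF : ∀ t ∈ Ici (0:ℝ), DifferentiableOn ℂ (F t) Ω₀)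
    (hG : ∀ t ∈ Ici (0:ℝ), DifferentiableOn ℂ (G t) Ω₀)
    (hFt : ∀ z ∈ Ω₀, ContDiffOn ℝ 2 (fun t => F t z) (Ici 0))
    (hGt : ∀ z ∈ Ω₀, ContDiffOn ℝ 2 (fun t => G t z) (Ici 0))
    (hft : ∀ z ∈ Ω₀, ContDiffOn ℝ 2 (fun t => deriv (F t) z) (Ici 0))
    (hgt : ∀ z ∈ Ω₀, ContDiffOn ℝ 2 (fun t => deriv (G t) z) (Ici 0)) :
    (∀ t ∈ Ici (0:ℝ), ∀ z ∈ Ω₀,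
        derivWithin (fun s => eulerExpr F G s z.re z.im) (Ici 0) t = 0)
      ↔ (∀ t ∈ Ici (0:ℝ), ∀ z ∈ Ω₀,
        derivWithin (fun s =>
          (derivWithin (fun u => deriv (F u) z) (Ici 0) s
              * (starRingEnd ℂ) (deriv (F s) z)
            - deriv (G s) z
              * (starRingEnd ℂ) (derivWithin (fun u => deriv (G u) z) (Ici 0) s)).im)
          (Ici 0) t = 0) :=
  stmt_5_general Ω₀ hΩo F G hF hG hft hgt
end

section
/- Let Ω₀ ⊆ ℂ be a simply connected domain and let F₀ + conj(G₀) be a univalent, sense preserving harmonic mapping on Ω₀ with G₀' = λ·F₀' for some λ ∈ ℂ (necessarily |λ| < 1). Suppose F(t,·), G(t,·) are holomorphic on Ω₀ for each t ≥ 0, with C¹ dependence on t, that F(0,·) = F₀ and G(0,·) = G₀, and that f = ∂F/∂z, g = ∂G/∂z satisfy the governing equation f_t(t,z)·conj(f(t,z)) − g(t,z)·conj(g_t(t,z)) = i·ν(z, conj(z)) for some time-independent real-valued function ν on Ω₀, with f(t,·) and g(t,·) not identically zero. Then there exist a C¹ function β : [0,∞) → ℂ with β(0) = λ and a real constant ν₀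 such that for all t ≥ 0 and z ∈ Ω₀: f(t,z) = √(1 − |λ|² + |β(t)|²) · exp( i·∫₀ᵗ (ν₀ + Im{β(s)·conj(β'(s))}) / (1 − |λ|² + |β(s)|²) ds ) · F₀'(z) and g(t,z) = β(t)·F₀'(z). -/
/-!
Differentiating `|f|² - |g|²` in `t` and adding the governing equation to its conjugate shows
`|f(t,z)|² - |g(t,z)|² = (1 - |λ|²) |F₀'(z)|²` for all `t`. Hence `h = f(t,·) / F₀'` and
`k = g(t,·) / F₀'` are holomorphic with `|h|² - |k|²` a positive constant; applying `∂` and then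
`∂̄` to this identity gives `h' conj h = k' conj k` and `|h'| = |k'|`, which with `|h| > |k|`
force `h' = k' = 0`. So `f = α(t) F₀'` and `g = β(t) F₀'`, and the governing equation becomes
`α' conj α - β conj β' = i ν₀`. Its imaginary part says that the angular velocity of `α` is
`(ν₀ + Im (β conj β')) / |α|²`, and `|α|² = 1 - |λ|² + |β|²`, which integrates to the polar
form of `α`.
-/

open Set Complex ComplexConjugate Topology

theorem HasDerivAt.comp_add_ofReal_mul {p : ℂ → ℂ} {p' z : ℂ} (v : ℂ) (hp : HasDerivAt p p' z) :
    HasDerivAt (fun e : ℝ => p (z + e * v)) (p' * v) 0 := by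
  have hline : HasDerivAt (fun w : ℂ => z + w * v) v ((0 : ℝ) : ℂ) := by
    simpa using ((hasDerivAt_id (0 : ℂ)).mul_const v).const_add z
  exact (hp.comp_of_eq _ hline (by simp)).comp_ofReal

theorem wirtinger_eq_of_mul_conj_sub_mul_conj_eq {Ω : Set ℂ} (hΩ : IsOpen Ω) {z c : ℂ}
    (hz : z ∈ Ω) {p₁ p₂ q₁ q₂ : ℂ → ℂ} {p₁' p₂' q₁' q₂' : ℂ}
    (h₁ : HasDerivAt p₁ p₁' z) (h₂ : HasDerivAt p₂ p₂' z)
    (h₃ : HasDerivAt q₁ q₁' z) (h₄ : HasDerivAt q₂ q₂' z)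
    (hc : ∀ w ∈ Ω, p₁ w * conj (p₂ w) - q₁ w * conj (q₂ w) = c) :
    p₁' * conj (p₂ z) = q₁' * conj (q₂ z) ∧ p₁ z * conj p₂' = q₁ z * conj q₂' := by
  -- the derivative of the constant along the direction `v` is `v ∂ + conj v ∂̄`
  have hdir : ∀ v : ℂ, v * (p₁' * conj (p₂ z) - q₁' * conj (q₂ z))
      + conj v * (p₁ z * conj p₂' - q₁ z * conj q₂') = 0 := by
    intro v
    have hD := ((h₁.comp_add_ofReal_mul v).mul (h₂.comp_add_ofReal_mul v).star).sub
      ((h₃.comp_add_ofReal_mul v).mul (h₄.comp_add_ofReal_mul v).star)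
    have hmem : ∀ᶠ e : ℝ in 𝓝 0, z + e * v ∈ Ω :=
      (by fun_prop : Continuous fun e : ℝ => z + e * v).continuousAt.preimage_mem_nhds
        (by simpa using hΩ.mem_nhds hz)
    have hconst := (hasDerivAt_const (0 : ℝ) c).congr_of_eventuallyEq
      (hmem.mono fun e he => hc _ he)
    have h0 := hD.unique hconst
    simp only [ofReal_zero, zero_mul, add_zero, ← starRingEnd_apply, map_mul] at h0
    linear_combination h0
  have h1 := hdir 1
  have hI := hdir I
  simp only [map_one, one_mul, conj_I] at h1 hI
  have hX : p₁' * conj (p₂ z) = q₁' * conj (q₂ z) := by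
    linear_combination (h1 - I * hI) / 2 + ((p₁' * conj (p₂ z) - q₁' * conj (q₂ z)
      - (p₁ z * conj p₂' - q₁ z * conj q₂')) / 2) * I_sq
  exact ⟨hX, by linear_combination h1 - hX⟩

theorem deriv_eq_zero_of_norm_sq_sub_norm_sq_eq {Ω : Set ℂ} (hΩ : IsOpen Ω) {h k : ℂ → ℂ}
    (hh : DifferentiableOn ℂ h Ω) (hk : DifferentiableOn ℂ k Ω) {c : ℝ} (hc : 0 < c)
    (hid : ∀ z ∈ Ω, ‖h z‖ ^ 2 - ‖k z‖ ^ 2 = c) {z : ℂ} (hz : z ∈ Ω) :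
    deriv h z = 0 ∧ deriv k z = 0 := by
  have hasDeriv : ∀ {p : ℂ → ℂ}, DifferentiableOn ℂ p Ω → ∀ w ∈ Ω, HasDerivAt p (deriv p w) w :=
    fun hp w hw => (hp.differentiableAt (hΩ.mem_nhds hw)).hasDerivAt
  have dh := hasDeriv hh
  have dk := hasDeriv hk
  have d2h := hasDeriv (hh.deriv hΩ)
  have d2k := hasDeriv (hk.deriv hΩ)
  have hid' : ∀ w ∈ Ω, h w * conj (h w) - k w * conj (k w) = c := fun w hw => by
    simp only [mul_conj']
    exact_mod_cast hid w hw
  have hdz : ∀ w ∈ Ω, deriv h w * conj (h w) = deriv k w * conj (k w) := fun w hw =>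
    (wirtinger_eq_of_mul_conj_sub_mul_conj_eq hΩ hw (dh w hw) (dh w hw) (dk w hw) (dk w hw)
      hid').1
  have hdzdzbar : deriv h z * conj (deriv h z) = deriv k z * conj (deriv k z) :=
    (wirtinger_eq_of_mul_conj_sub_mul_conj_eq (c := 0) hΩ hz (d2h z hz) (dh z hz) (d2k z hz)
      (dk z hz) fun w hw => sub_eq_zero.2 (hdz w hw)).2
  have e1 : ‖deriv h z‖ * ‖h z‖ = ‖deriv k z‖ * ‖k z‖ := by
    simpa only [norm_mul, RCLike.norm_conj] using congrArg norm (hdz z hz)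
  have e2 : ‖deriv h z‖ = ‖deriv k z‖ := by
    simp only [mul_conj'] at hdzdzbar
    exact (pow_left_inj₀ (norm_nonneg _) (norm_nonneg _) two_ne_zero).1
      (by exact_mod_cast hdzdzbar)
  have hlt : ‖k z‖ < ‖h z‖ := by
    have := hid z hz
    exact (pow_lt_pow_iff_left₀ (norm_nonneg _) (norm_nonneg _) two_ne_zero).1 (by linarith)
  have h0 : ‖deriv h z‖ = 0 := by
    rw [← e2] at e1
    nlinarith [norm_nonneg (deriv h z)]
  exact ⟨norm_eq_zero.1 h0, norm_eq_zero.1 (e2 ▸ h0)⟩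

theorem eq_div_mul_of_norm_sq_sub_norm_sq_eq {Ω : Set ℂ} (hΩ : IsOpen Ω)
    (hΩc : IsPreconnected Ω) {φ u v : ℂ → ℂ} (hφ : DifferentiableOn ℂ φ Ω)
    (hφ0 : ∀ z ∈ Ω, φ z ≠ 0) (hu : DifferentiableOn ℂ u Ω) (hv : DifferentiableOn ℂ v Ω)
    {c : ℝ} (hc : 0 < c) (huv : ∀ z ∈ Ω, ‖u z‖ ^ 2 - ‖v z‖ ^ 2 = c * ‖φ z‖ ^ 2)
    {w : ℂ} (hw : w ∈ Ω) :
    ∀ z ∈ Ω, u z = u w / φ w * φ z ∧ v z = v w / φ w * φ z := by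
  have hh := hu.div hφ hφ0
  have hk := hv.div hφ hφ0
  have hid : ∀ z ∈ Ω, ‖(u / φ) z‖ ^ 2 - ‖(v / φ) z‖ ^ 2 = c := fun z hz => by
    have := norm_pos_iff.2 (hφ0 z hz)
    simp only [Pi.div_apply, norm_div, div_pow]
    field_simp
    linarith [huv z hz]
  have hd := fun z (hz : z ∈ Ω) => deriv_eq_zero_of_norm_sq_sub_norm_sq_eq hΩ hh hk hc hid hz
  intro z hz
  have hh_eq := hΩ.is_const_of_deriv_eq_zero hΩc hh (fun x hx => (hd x hx).1) hz hw
  have hk_eq := hΩ.is_const_of_deriv_eq_zero hΩc hk (fun x hx => (hd x hx).2) hz hw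
  simp only [Pi.div_apply, div_eq_iff (hφ0 z hz)] at hh_eq hk_eq
  exact ⟨hh_eq, hk_eq⟩

theorem Convex.eq_of_hasDerivWithinAt_zero {E : Type*} [NormedAddCommGroup E] [NormedSpace ℝ E]
    {s : Set ℝ} (hs : Convex ℝ s) {F : ℝ → E} (hF : ∀ t ∈ s, HasDerivWithinAt F 0 s t)
    {a b : ℝ} (ha : a ∈ s) (hb : b ∈ s) : F a = F b := by
  have := hs.norm_image_sub_le_of_norm_hasDerivWithin_le hF (fun _ _ => norm_zero.le) hb ha
  rwa [zero_mul, norm_le_zero_iff, sub_eq_zero] at this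

theorem norm_sq_sub_norm_sq_eq_of_re_eq_zero {s : Set ℝ} (hs : Convex ℝ s)
    {u v u' v' : ℝ → ℂ} (hu : ∀ t ∈ s, HasDerivWithinAt u (u' t) s t)
    (hv : ∀ t ∈ s, HasDerivWithinAt v (v' t) s t)
    (hre : ∀ t ∈ s, (u' t * conj (u t) - v t * conj (v' t)).re = 0)
    {a b : ℝ} (ha : a ∈ s) (hb : b ∈ s) :
    ‖u a‖ ^ 2 - ‖v a‖ ^ 2 = ‖u b‖ ^ 2 - ‖v b‖ ^ 2 := by
  suffices h : u a * conj (u a) - v a * conj (v a) = u b * conj (u b) - v b * conj (v b) by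
    simp only [mul_conj'] at h
    exact_mod_cast h
  refine hs.eq_of_hasDerivWithinAt_zero (F := fun t => u t * conj (u t) - v t * conj (v t))
    (fun t ht => ?_) ha hb
  have hD := ((hu t ht).mul (hu t ht).star).sub ((hv t ht).mul (hv t ht).star)
  -- the derivative is `X + conj X` with `X` the left side of `hre`
  have h0 :
      u' t * star (u t) + u t * star (u' t) - (v' t * star (v t) + v t * star (v' t)) = 0 := by
    have := add_conj (u' t * conj (u t) - v t * conj (v' t))
    simp only [hre t ht, ofReal_zero, mul_zero, map_sub, map_mul, conj_conj] at this
    simp only [← starRingEnd_apply]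
    linear_combination this
  rw [h0] at hD
  exact hD

theorem eq_norm_of_im_mul_conj_eq_zero {s : Set ℝ} (hs : Convex ℝ s) {q q' : ℝ → ℂ}
    (hq : ∀ t ∈ s, HasDerivWithinAt q (q' t) s t) (hq0 : ∀ t ∈ s, q t ≠ 0)
    (him : ∀ t ∈ s, (q' t * conj (q t)).im = 0) {a : ℝ} (ha : a ∈ s) (hqa : q a = ‖q a‖) :
    ∀ t ∈ s, q t = ‖q t‖ := by
  have hconj0 : ∀ t ∈ s, conj (q t) ≠ 0 := fun t ht => (map_ne_zero _).2 (hq0 t ht)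
  -- `q / conj q` has derivative `2 i Im (q' conj q) / conj q ^ 2 = 0`
  have hphase : ∀ t ∈ s, q t / conj (q t) = 1 := by
    intro t ht
    have hqa' : q a / conj (q a) = 1 := by
      rw [div_eq_one_iff_eq (hconj0 a ha), hqa, conj_ofReal]
    refine (hs.eq_of_hasDerivWithinAt_zero (F := fun t => q t / conj (q t))
      (fun t ht => ?_) ht ha).trans hqa'
    have hD := (hq t ht).div (hq t ht).star (hconj0 t ht)
    have h0 : q' t * star (q t) - q t * star (q' t) = 0 := by
      have := sub_conj (q' t * conj (q t))
      simp only [him t ht, mul_zero, ofReal_zero, zero_mul, map_mul, conj_conj] at this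
      simp only [← starRingEnd_apply]
      linear_combination this
    rwa [h0, zero_div] at hD
  have hsq : ∀ t ∈ s, q t ^ 2 = (‖q t‖ : ℂ) ^ 2 := fun t ht => by
    rw [← mul_conj', ← (div_eq_one_iff_eq (hconj0 t ht)).1 (hphase t ht), sq]
  rcases hs.isPreconnected.eq_or_eq_neg_of_sq_eq (f := q) (g := fun t => (‖q t‖ : ℂ))
    (fun t ht => (hq t ht).continuousWithinAt)
    (continuous_ofReal.comp_continuousOn (continuous_norm.comp_continuousOn
      fun t ht => (hq t ht).continuousWithinAt)) hsq
    (fun ht => ofReal_ne_zero.2 (norm_ne_zero_iff.2 (hq0 _ ht))) with h | h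
  · exact h
  · have hna : (‖q a‖ : ℂ) = 0 := by
      have := h ha
      simp only [Pi.neg_apply] at this
      linear_combination (this - hqa) / 2
    exact absurd (norm_eq_zero.1 (ofReal_eq_zero.1 hna)) (hq0 a ha)

theorem hasDerivWithinAt_integral_Ici {m : ℝ → ℝ} {a : ℝ} (hm : ContinuousOn m (Ici a))
    {t : ℝ} (ht : t ∈ Ici a) :
    HasDerivWithinAt (fun u => ∫ s in a..u, m s) (m t) (Ici a) t := by
  have hint : IntervalIntegrable m MeasureTheory.volume a t :=
    (hm.mono (by rw [uIcc_of_le ht]; exact Icc_subset_Ici_self)).intervalIntegrable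
  rcases eq_or_lt_of_le (mem_Ici.mp ht) with rfl | hat
  · exact intervalIntegral.integral_hasDerivWithinAt_right (t := Ioi a) hint
      ((hm.mono Ioi_subset_Ici_self).stronglyMeasurableAtFilter_nhdsWithin measurableSet_Ioi a)
      ((hm a self_mem_Ici).mono Ioi_subset_Ici_self)
  · exact (intervalIntegral.integral_hasDerivAt_right hint
      ((hm.mono Ioi_subset_Ici_self).stronglyMeasurableAtFilter isOpen_Ioi t hat)
      (hm.continuousAt (Ici_mem_nhds hat))).hasDerivWithinAt

theorem eq_norm_mul_exp_integral {α α' : ℝ → ℂ}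
    (hα : ∀ t ∈ Ici (0 : ℝ), HasDerivWithinAt α (α' t) (Ici 0) t) (hα' : ContinuousOn α' (Ici 0))
    (hα0 : ∀ t ∈ Ici (0 : ℝ), α t ≠ 0) (hαr : α 0 = ‖α 0‖) {t : ℝ} (ht : t ∈ Ici (0 : ℝ)) :
    α t = ‖α t‖ * exp (I * ↑(∫ s in (0 : ℝ)..t, (α' s * conj (α s)).im / ‖α s‖ ^ 2)) := by
  set m : ℝ → ℝ := fun s => (α' s * conj (α s)).im / ‖α s‖ ^ 2 with hm_def
  set θ : ℝ → ℝ := fun u => ∫ s in (0 : ℝ)..u, m s with hθ_def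
  have hαc : ContinuousOn α (Ici 0) := fun t ht => (hα t ht).continuousWithinAt
  have hm : ContinuousOn m (Ici 0) :=
    (continuous_im.comp_continuousOn (hα'.mul (continuous_conj.comp_continuousOn hαc))).div
      (hαc.norm.pow 2) fun s hs => pow_ne_zero 2 (norm_ne_zero_iff.2 (hα0 s hs))
  -- `q = α e^{-iθ}` has constant argument, since `θ' = Im (α' / α)`
  set E : ℝ → ℂ := fun s => exp (↑(-θ s) * I) with hE_def
  set q : ℝ → ℂ := fun s => α s * E s with hq_def
  have hEE : ∀ s, E s * conj (E s) = 1 := fun s => by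
    rw [mul_conj', norm_exp_ofReal_mul_I, ofReal_one, one_pow]
  have hq : ∀ s ∈ Ici (0 : ℝ), HasDerivWithinAt q
      (α' s * E s + α s * (E s * (↑(-m s) * I))) (Ici 0) s := fun s hs =>
    (hα s hs).mul (((hasDerivWithinAt_integral_Ici hm hs).neg.ofReal_comp.mul_const I).cexp)
  have him : ∀ s ∈ Ici (0 : ℝ),
      ((α' s * E s + α s * (E s * (↑(-m s) * I))) * conj (q s)).im = 0 := by
    intro s hs
    have hnorm : ‖α s‖ ^ 2 ≠ 0 := pow_ne_zero 2 (norm_ne_zero_iff.2 (hα0 s hs))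
    have hval : (α' s * E s + α s * (E s * (↑(-m s) * I))) * conj (q s)
        = α' s * conj (α s) - ↑(m s * ‖α s‖ ^ 2) * I := by
      simp only [hq_def, map_mul, ofReal_neg, ofReal_mul, ofReal_pow]
      linear_combination (α' s * conj (α s) - m s * (α s * conj (α s)) * I) * hEE s
        - m s * I * mul_conj' (α s)
    rw [hval, sub_im, mul_I_im, ofReal_re, hm_def, div_mul_cancel₀ _ hnorm, sub_self]
  have hq0 : q 0 = ‖q 0‖ := by
    simp [hq_def, hE_def, hθ_def, ← hαr]
  have hqt := eq_norm_of_im_mul_conj_eq_zero (convex_Ici 0) hq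
    (fun s hs => mul_ne_zero (hα0 s hs) (exp_ne_zero _)) him self_mem_Ici hq0 t ht
  simp only [hq_def, norm_mul, hE_def, norm_exp_ofReal_mul_I, mul_one] at hqt
  calc α t = α t * E t * exp (I * ↑(θ t)) := by
        rw [hE_def, mul_assoc, ← exp_add, ofReal_neg, neg_mul, neg_add_eq_sub, mul_comm I,
          sub_self, exp_zero, mul_one]
    _ = _ := by rw [hqt]

theorem eq_sqrt_mul_exp_integral_of_mul_conj_sub_mul_conj_eq {α β α' β' : ℝ → ℂ} {c ν₀ : ℝ}
    (hc : 0 < c) (hα : ∀ t ∈ Ici (0 : ℝ), HasDerivWithinAt α (α' t) (Ici 0) t)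
    (hα' : ContinuousOn α' (Ici 0)) (hβ : ∀ t ∈ Ici (0 : ℝ), HasDerivWithinAt β (β' t) (Ici 0) t)
    (hnorm : ∀ t ∈ Ici (0 : ℝ), ‖α t‖ ^ 2 - ‖β t‖ ^ 2 = c) (hαr : α 0 = ‖α 0‖)
    (hgov : ∀ t ∈ Ici (0 : ℝ), α' t * conj (α t) - β t * conj (β' t) = I * ν₀)
    {t : ℝ} (ht : t ∈ Ici (0 : ℝ)) :
    α t = √(c + ‖β t‖ ^ 2) * exp (I * ↑(∫ s in (0 : ℝ)..t,
      (ν₀ + (β s * conj (derivWithin β (Ici 0) s)).im) / (c + ‖β s‖ ^ 2))) := by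
  have hsq : ∀ s ∈ Ici (0 : ℝ), c + ‖β s‖ ^ 2 = ‖α s‖ ^ 2 := fun s hs => by
    linarith [hnorm s hs]
  have hα0 : ∀ s ∈ Ici (0 : ℝ), α s ≠ 0 := fun s hs hαs => by
    have := hsq s hs
    rw [hαs, norm_zero] at this
    nlinarith [sq_nonneg ‖β s‖]
  have hint : EqOn (fun s => (ν₀ + (β s * conj (derivWithin β (Ici 0) s)).im) / (c + ‖β s‖ ^ 2))
      (fun s => (α' s * conj (α s)).im / ‖α s‖ ^ 2) (uIcc 0 t) := by
    intro s hs
    rw [uIcc_of_le ht] at hs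
    have hs' : s ∈ Ici (0 : ℝ) := Icc_subset_Ici_self hs
    have him := congrArg im (hgov s hs')
    rw [sub_im, I_mul_im, ofReal_re] at him
    simp only [(hβ s hs').derivWithin (uniqueDiffOn_Ici 0 s hs'), hsq s hs']
    congr 1
    linarith
  rw [intervalIntegral.integral_congr hint, hsq t ht, Real.sqrt_sq (norm_nonneg _)]
  exact eq_norm_mul_exp_integral hα hα' hα0 hαr ht

theorem one_sub_norm_sq_pos_and_ne_zero {lam w : ℂ} (h : 0 < ‖w‖ ^ 2 - ‖lam * w‖ ^ 2) :
    0 < 1 - ‖lam‖ ^ 2 ∧ w ≠ 0 := by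
  rw [norm_mul, mul_pow, ← one_sub_mul] at h
  exact ⟨pos_of_mul_pos_left h (sq_nonneg _), fun hw => by simp [hw] at h⟩

theorem div_mul_conj_div_sub_div_mul_conj_div {a b c d w : ℂ} {r : ℝ}
    (h : a * conj b - c * conj d = I * r) :
    a / w * conj (b / w) - c / w * conj (d / w) = I * ↑(r / ‖w‖ ^ 2) := by
  rw [map_div₀, map_div₀, ofReal_div, ofReal_pow, ← mul_conj', ← mul_div_assoc I, ← h]
  ring

theorem stmt_6_general (Ω₀ : Set ℂ) (hΩne : Ω₀.Nonempty) (hΩo : IsOpen Ω₀) (hΩc : IsConnected Ω₀)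
    (F₀ G₀ : ℂ → ℂ)
    (hF₀ : DifferentiableOn ℂ F₀ Ω₀)
    (hsp : ∀ z ∈ Ω₀, 0 < ‖deriv F₀ z‖ ^ 2 - ‖deriv G₀ z‖ ^ 2)
    (lam : ℂ) (hlam : ∀ z ∈ Ω₀, deriv G₀ z = lam * deriv F₀ z)
    (F G f g ft gt : ℝ → ℂ → ℂ)
    (hF : ∀ t ∈ Ici (0:ℝ), DifferentiableOn ℂ (F t) Ω₀)
    (hG : ∀ t ∈ Ici (0:ℝ), DifferentiableOn ℂ (G t) Ω₀)
    (hf : ∀ t ∈ Ici (0:ℝ), ∀ z ∈ Ω₀, f t z = deriv (F t) z)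
    (hg : ∀ t ∈ Ici (0:ℝ), ∀ z ∈ Ω₀, g t z = deriv (G t) z)
    (hftd : ∀ z ∈ Ω₀, ∀ t ∈ Ici (0:ℝ),
      HasDerivWithinAt (fun s => f s z) (ft t z) (Ici 0) t)
    (hgtd : ∀ z ∈ Ω₀, ∀ t ∈ Ici (0:ℝ),
      HasDerivWithinAt (fun s => g s z) (gt t z) (Ici 0) t)
    (hftc : ∀ z ∈ Ω₀, ContinuousOn (fun t => ft t z) (Ici 0))
    (hgtc : ∀ z ∈ Ω₀, ContinuousOn (fun t => gt t z) (Ici 0))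
    (hF0 : ∀ z ∈ Ω₀, F 0 z = F₀ z) (hG0 : ∀ z ∈ Ω₀, G 0 z = G₀ z)
    (ν : ℂ → ℝ)
    (hgov : ∀ t ∈ Ici (0:ℝ), ∀ z ∈ Ω₀,
      ft t z * (starRingEnd ℂ) (f t z) - g t z * (starRingEnd ℂ) (gt t z)
        = Complex.I * (ν z : ℂ)) :
    ∃ (β : ℝ → ℂ) (ν₀ : ℝ), ContDiffOn ℝ 1 β (Ici 0) ∧ β 0 = lam ∧
      ∀ t ∈ Ici (0:ℝ), ∀ z ∈ Ω₀,
        f t z = (Real.sqrt (1 - ‖lam‖ ^ 2 + ‖β t‖ ^ 2) : ℂ) *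
            Complex.exp (Complex.I * ((∫ s in (0:ℝ)..t,
              (ν₀ + (β s * (starRingEnd ℂ) (derivWithin β (Ici 0) s)).im)
                / (1 - ‖lam‖ ^ 2 + ‖β s‖ ^ 2)) : ℝ)) * deriv F₀ z ∧
        g t z = β t * deriv F₀ z := by
  obtain ⟨z₀, hz₀⟩ := hΩne
  have hsp' : ∀ z ∈ Ω₀, 0 < 1 - ‖lam‖ ^ 2 ∧ deriv F₀ z ≠ 0 := fun z hz =>
    one_sub_norm_sq_pos_and_ne_zero (hlam z hz ▸ hsp z hz)
  have hc := (hsp' z₀ hz₀).1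
  have hφ0 : ∀ z ∈ Ω₀, deriv F₀ z ≠ 0 := fun z hz => (hsp' z hz).2
  have hf0 : ∀ z ∈ Ω₀, f 0 z = deriv F₀ z := fun z hz =>
    (hf 0 self_mem_Ici z hz).trans (EqOn.eventuallyEq_of_mem hF0 (hΩo.mem_nhds hz)).deriv_eq
  have hg0 : ∀ z ∈ Ω₀, g 0 z = lam * deriv F₀ z := fun z hz =>
    ((hg 0 self_mem_Ici z hz).trans (EqOn.eventuallyEq_of_mem hG0 (hΩo.mem_nhds hz)).deriv_eq).trans
      (hlam z hz)
  have hcons : ∀ t ∈ Ici (0 : ℝ), ∀ z ∈ Ω₀,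
      ‖f t z‖ ^ 2 - ‖g t z‖ ^ 2 = (1 - ‖lam‖ ^ 2) * ‖deriv F₀ z‖ ^ 2 := fun t ht z hz => by
    rw [norm_sq_sub_norm_sq_eq_of_re_eq_zero (convex_Ici 0) (hftd z hz) (hgtd z hz)
      (fun s hs => by simp [hgov s hs z hz]) ht self_mem_Ici, hf0 z hz, hg0 z hz, norm_mul]
    ring
  have hsep : ∀ t ∈ Ici (0 : ℝ), ∀ z ∈ Ω₀, f t z = f t z₀ / deriv F₀ z₀ * deriv F₀ z ∧
      g t z = g t z₀ / deriv F₀ z₀ * deriv F₀ z := fun t ht =>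
    eq_div_mul_of_norm_sq_sub_norm_sq_eq hΩo hΩc.isPreconnected (hF₀.deriv hΩo) hφ0
      (((hF t ht).deriv hΩo).congr (hf t ht)) (((hG t ht).deriv hΩo).congr (hg t ht)) hc
      (hcons t ht) hz₀
  set β : ℝ → ℂ := fun t => g t z₀ / deriv F₀ z₀
  have hβ : ∀ t ∈ Ici (0 : ℝ), HasDerivWithinAt β (gt t z₀ / deriv F₀ z₀) (Ici 0) t :=
    fun t ht => (hgtd z₀ hz₀ t ht).div_const _
  have hnorm : ∀ t ∈ Ici (0 : ℝ), ‖f t z₀ / deriv F₀ z₀‖ ^ 2 - ‖β t‖ ^ 2 = 1 - ‖lam‖ ^ 2 :=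
    fun t ht => by
      rw [norm_div, norm_div, div_pow, div_pow, ← sub_div, hcons t ht z₀ hz₀,
        mul_div_cancel_right₀ _ (pow_ne_zero 2 (norm_ne_zero_iff.2 (hφ0 z₀ hz₀)))]
  refine ⟨β, ν z₀ / ‖deriv F₀ z₀‖ ^ 2, (contDiffOn_one_iff_derivWithin (uniqueDiffOn_Ici 0)).2
    ⟨fun t ht => (hβ t ht).differentiableWithinAt, ((hgtc z₀ hz₀).div_const _).congr
      fun t ht => (hβ t ht).derivWithin (uniqueDiffOn_Ici 0 t ht)⟩,
    by simp [β, hg0 z₀ hz₀, hφ0 z₀ hz₀], fun t ht z hz => ⟨?_, (hsep t ht z hz).2⟩⟩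
  rw [(hsep t ht z hz).1, eq_sqrt_mul_exp_integral_of_mul_conj_sub_mul_conj_eq hc
    (fun t ht => (hftd z₀ hz₀ t ht).div_const _) ((hftc z₀ hz₀).div_const _) hβ hnorm
    (by simp [hf0 z₀ hz₀, hφ0 z₀ hz₀])
    (fun t ht => div_mul_conj_div_sub_div_mul_conj_div (hgov t ht z₀ hz₀)) ht]

/-- **Theorem (solutions with harmonic labellings, linearly dependent case).** If the
initial univalent sense preserving labelling `F₀ + conj G₀` satisfies `G₀' = λ F₀'`, and
`f = ∂F/∂z`, `g = ∂G/∂z` solve the governing equation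
`f_t conj f − g conj g_t = i ν(z, conj z)` with `f(t,·), g(t,·)` not identically zero,
then `f(t,z) = √(1 − |λ|² + |β(t)|²) e^{i∫₀ᵗ (ν₀ + Im(β conj β'))/(1 − |λ|² + |β|²)} F₀'(z)`
and `g(t,z) = β(t) F₀'(z)` for some `C¹` function `β` with `β(0) = λ` and some `ν₀ ∈ ℝ`. -/
theorem stmt_6 (Ω₀ : Set ℂ) (hΩne : Ω₀.Nonempty) (hΩo : IsOpen Ω₀) (hΩc : IsConnected Ω₀)
    (hΩsc : SimplyConnectedSpace Ω₀)
    (F₀ G₀ : ℂ → ℂ)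
    (hF₀ : DifferentiableOn ℂ F₀ Ω₀) (hG₀ : DifferentiableOn ℂ G₀ Ω₀)
    (huniv : Set.InjOn (fun z => F₀ z + (starRingEnd ℂ) (G₀ z)) Ω₀)
    (hsp : ∀ z ∈ Ω₀, 0 < ‖deriv F₀ z‖ ^ 2 - ‖deriv G₀ z‖ ^ 2)
    (lam : ℂ) (hlam : ∀ z ∈ Ω₀, deriv G₀ z = lam * deriv F₀ z)
    (F G f g ft gt : ℝ → ℂ → ℂ)
    (hF : ∀ t ∈ Ici (0:ℝ), DifferentiableOn ℂ (F t) Ω₀)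
    (hG : ∀ t ∈ Ici (0:ℝ), DifferentiableOn ℂ (G t) Ω₀)
    (hf : ∀ t ∈ Ici (0:ℝ), ∀ z ∈ Ω₀, f t z = deriv (F t) z)
    (hg : ∀ t ∈ Ici (0:ℝ), ∀ z ∈ Ω₀, g t z = deriv (G t) z)
    (hftd : ∀ z ∈ Ω₀, ∀ t ∈ Ici (0:ℝ),
      HasDerivWithinAt (fun s => f s z) (ft t z) (Ici 0) t)
    (hgtd : ∀ z ∈ Ω₀, ∀ t ∈ Ici (0:ℝ),
      HasDerivWithinAt (fun s => g s z) (gt t z) (Ici 0) t)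
    (hftc : ∀ z ∈ Ω₀, ContinuousOn (fun t => ft t z) (Ici 0))
    (hgtc : ∀ z ∈ Ω₀, ContinuousOn (fun t => gt t z) (Ici 0))
    (hF0 : ∀ z ∈ Ω₀, F 0 z = F₀ z) (hG0 : ∀ z ∈ Ω₀, G 0 z = G₀ z)
    (ν : ℂ → ℝ)
    (hgov : ∀ t ∈ Ici (0:ℝ), ∀ z ∈ Ω₀,
      ft t z * (starRingEnd ℂ) (f t z) - g t z * (starRingEnd ℂ) (gt t z)
        = Complex.I * (ν z : ℂ))
    (hfne : ∀ t ∈ Ici (0:ℝ), ∃ z ∈ Ω₀, f t z ≠ 0)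
    (hgne : ∀ t ∈ Ici (0:ℝ), ∃ z ∈ Ω₀, g t z ≠ 0) :
    ∃ (β : ℝ → ℂ) (ν₀ : ℝ), ContDiffOn ℝ 1 β (Ici 0) ∧ β 0 = lam ∧
      ∀ t ∈ Ici (0:ℝ), ∀ z ∈ Ω₀,
        f t z = (Real.sqrt (1 - ‖lam‖ ^ 2 + ‖β t‖ ^ 2) : ℂ) *
            Complex.exp (Complex.I * ((∫ s in (0:ℝ)..t,
              (ν₀ + (β s * (starRingEnd ℂ) (derivWithin β (Ici 0) s)).im)
                / (1 - ‖lam‖ ^ 2 + ‖β s‖ ^ 2)) : ℝ)) * deriv F₀ z ∧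
        g t z = β t * deriv F₀ z :=
  stmt_6_general Ω₀ hΩne hΩo hΩc F₀ G₀ hF₀ hsp lam hlam F G f g ft gt hF hG hf hg hftd hgtd hftc
    hgtc hF0 hG0 ν hgov
end

section
/- Let c > 0 and ν₀ ∈ ℝ, and let α, β : [0,∞) → ℂ be C¹ functions satisfying α'(t)·conj(α(t)) − β(t)·conj(β'(t)) = i·ν₀ and |α(t)|² = |β(t)|² + c for all t ≥ 0. Then there exists φ₀ ∈ ℝ with α(0) = √(|β(0)|² + c)·e^{iφ₀} such that for all t ≥ 0: α(t) = √(|β(t)|² + c) · exp( i·( φ₀ + ∫₀ᵗ (ν₀ + Im{β(s)·conj(β'(s))}) / (|β(s)|² + c) ds ) ). -/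
/-!
Let `u = |β|² + c`, `θ(t) = φ₀ + ∫₀ᵗ (ν₀ + Im(β β̄'))/u` and `w = √u · e^{iθ}`. Since
`u' = 2 Re(β β̄')`, one computes `w' w̄ = u'/2 + i u θ' = β β̄' + i ν₀ = α' ᾱ`. As `|α| = |w| ≠ 0`,
this says `α'/α = w'/w`, so `α/w` is constant, and `φ₀ = arg α(0)` makes it `1` at `t = 0`.
-/

open Set ComplexConjugate

theorem hasDerivWithinAt_integral_Ici_s10 {E : Type*} [NormedAddCommGroup E] [NormedSpace ℝ E]
    [CompleteSpace E] {f : ℝ → E} {a x : ℝ} (hf : ContinuousOn f (Ici a)) (hx : a ≤ x) :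
    HasDerivWithinAt (fun u => ∫ s in a..u, f s) (f x) (Ici a) x := by
  -- the `Fact` provides the `FTCFilter` instance for `𝓝[Icc a (x + 1)] x`
  have hmem : Fact (x ∈ Icc a (x + 1)) := ⟨⟨hx, by linarith⟩⟩
  have hfI : ContinuousOn f (Icc a (x + 1)) := hf.mono Icc_subset_Ici_self
  have h := intervalIntegral.integral_hasDerivWithinAt_right (s := Icc a (x + 1))
    (hf.mono (by rw [uIcc_of_le hx]; exact Icc_subset_Ici_self)).intervalIntegrable
    (hfI.stronglyMeasurableAtFilter_nhdsWithin measurableSet_Icc x) (hfI x hmem.out)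
  refine h.mono_of_mem_nhdsWithin ?_
  rw [← Ici_inter_Iic]
  exact inter_mem_nhdsWithin _ (Iic_mem_nhds (by linarith))

theorem constant_of_hasDerivWithinAt_Ici_zero {E : Type*} [NormedAddCommGroup E]
    [NormedSpace ℝ E] {f : ℝ → E} {a : ℝ} (hf : ∀ x ∈ Ici a, HasDerivWithinAt f 0 (Ici a) x) :
    ∀ x ∈ Ici a, f x = f a := fun x hx =>
  constant_of_has_deriv_right_zero
    (fun y hy => (hf y (Icc_subset_Ici_self hy)).continuousWithinAt.mono Icc_subset_Ici_self)
    (fun y hy => (hf y hy.1).mono (Ici_subset_Ici.2 hy.1)) x ⟨hx, le_rfl⟩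

theorem HasDerivWithinAt.norm_sq_complex {f : ℝ → ℂ} {f' : ℂ} {s : Set ℝ} {x : ℝ}
    (hf : HasDerivWithinAt f f' s x) :
    HasDerivWithinAt (‖f ·‖ ^ 2) (2 * (f x * conj f').re) s x := by
  convert hf.norm_sq using 2
  rw [Complex.inner, ← Complex.conj_re, map_mul, Complex.conj_conj, mul_comm]

theorem exists_hasDerivWithinAt_sqrt_mul_exp_I {u θ : ℝ → ℝ} {u' θ' : ℝ} {s : Set ℝ} {x : ℝ}
    (hu : HasDerivWithinAt u u' s x) (hθ : HasDerivWithinAt θ θ' s x) (hpos : 0 < u x) :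
    ∃ w', HasDerivWithinAt (fun t => (√(u t) : ℂ) * Complex.exp (Complex.I * θ t)) w' s x ∧
      w' * conj ((√(u x) : ℂ) * Complex.exp (Complex.I * θ x)) =
        (u' / 2 : ℝ) + Complex.I * (u x * θ' : ℝ) := by
  refine ⟨_, (hu.sqrt hpos.ne').ofReal_comp.mul (hθ.ofReal_comp.const_mul Complex.I).cexp, ?_⟩
  have hunit : Complex.exp (Complex.I * θ x) * conj (Complex.exp (Complex.I * θ x)) = 1 := by
    rw [Complex.mul_conj, Complex.normSq_eq_norm_sq, Complex.norm_exp_I_mul_ofReal]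
    norm_num
  have hsqrt : (√(u x) : ℂ) * √(u x) = u x := by
    exact_mod_cast Real.mul_self_sqrt hpos.le
  have hne : (√(u x) : ℂ) ≠ 0 := by exact_mod_cast (Real.sqrt_pos.2 hpos).ne'
  simp only [map_mul, Complex.conj_ofReal]
  push_cast
  field_simp
  linear_combination (u' + 2 * Complex.I * θ' * (√(u x) : ℂ) ^ 2) * hunit +
    2 * Complex.I * θ' * hsqrt

theorem hasDerivWithinAt_div_zero_of_mul_conj_eq {y₁ y₂ : ℝ → ℂ} {a₁ a₂ : ℂ} {s : Set ℝ}
    {x : ℝ} (h₁ : HasDerivWithinAt y₁ a₁ s x) (h₂ : HasDerivWithinAt y₂ a₂ s x)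
    (hnorm : ‖y₁ x‖ = ‖y₂ x‖) (hne : y₂ x ≠ 0) (hconj : a₁ * conj (y₁ x) = a₂ * conj (y₂ x)) :
    HasDerivWithinAt (fun t => y₁ t / y₂ t) 0 s x := by
  have hne₁ : conj (y₁ x) ≠ 0 := by
    rw [map_ne_zero, ← norm_ne_zero_iff, hnorm]
    exact norm_ne_zero_iff.2 hne
  have hsq : y₁ x * conj (y₁ x) = y₂ x * conj (y₂ x) := by
    simp only [Complex.mul_conj, Complex.normSq_eq_norm_sq, hnorm]
  have hnum : a₁ * y₂ x - y₁ x * a₂ = 0 := by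
    refine (mul_eq_zero_iff_right (mul_ne_zero hne₁ ((map_ne_zero (starRingEnd ℂ)).2 hne))).1 ?_
    linear_combination (y₂ x * conj (y₂ x)) * hconj - a₂ * conj (y₂ x) * hsq
  exact (h₁.div h₂ hne).congr_deriv (by rw [hnum, zero_div])

theorem eqOn_Ici_of_deriv_mul_conj_eq {y₁ y₂ y₁' y₂' : ℝ → ℂ} {a : ℝ}
    (h₁ : ∀ x ∈ Ici a, HasDerivWithinAt y₁ (y₁' x) (Ici a) x)
    (h₂ : ∀ x ∈ Ici a, HasDerivWithinAt y₂ (y₂' x) (Ici a) x)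
    (hnorm : ∀ x ∈ Ici a, ‖y₁ x‖ = ‖y₂ x‖) (hne : ∀ x ∈ Ici a, y₂ x ≠ 0)
    (hconj : ∀ x ∈ Ici a, y₁' x * conj (y₁ x) = y₂' x * conj (y₂ x)) (h₀ : y₁ a = y₂ a) :
    EqOn y₁ y₂ (Ici a) := by
  intro x hx
  have hratio := constant_of_hasDerivWithinAt_Ici_zero (fun x hx =>
    hasDerivWithinAt_div_zero_of_mul_conj_eq (h₁ x hx) (h₂ x hx) (hnorm x hx) (hne x hx)
      (hconj x hx)) x hx
  rwa [h₀, div_self (hne a self_mem_Ici), div_eq_one_iff_eq (hne x hx)] at hratio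

theorem eqOn_Ici_sqrt_mul_exp_of_deriv_mul_conj {y y' : ℝ → ℂ} {u u' θ θ' : ℝ → ℝ} {a : ℝ}
    (hy : ∀ x ∈ Ici a, HasDerivWithinAt y (y' x) (Ici a) x)
    (hu : ∀ x ∈ Ici a, HasDerivWithinAt u (u' x) (Ici a) x)
    (hθ : ∀ x ∈ Ici a, HasDerivWithinAt θ (θ' x) (Ici a) x)
    (hmod : ∀ x ∈ Ici a, ‖y x‖ ^ 2 = u x) (hpos : ∀ x ∈ Ici a, 0 < u x)
    (hconj : ∀ x ∈ Ici a, y' x * conj (y x) = (u' x / 2 : ℝ) + Complex.I * (u x * θ' x : ℝ))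
    (h₀ : θ a = (y a).arg) :
    EqOn y (fun t => (√(u t) : ℂ) * Complex.exp (Complex.I * θ t)) (Ici a) := by
  have hsqrt : ∀ x ∈ Ici a, √(u x) = ‖y x‖ := fun x hx => by
    rw [← hmod x hx, Real.sqrt_sq (norm_nonneg _)]
  choose! w' hw' hw'conj using fun x (hx : x ∈ Ici a) =>
    exists_hasDerivWithinAt_sqrt_mul_exp_I (hu x hx) (hθ x hx) (hpos x hx)
  refine eqOn_Ici_of_deriv_mul_conj_eq hy hw' (fun x hx => ?_) (fun x hx => ?_)
    (fun x hx => by rw [hconj x hx, hw'conj x hx]) ?_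
  · rw [norm_mul, Complex.norm_exp_I_mul_ofReal, mul_one, Complex.norm_real,
      Real.norm_of_nonneg (Real.sqrt_nonneg _), hsqrt x hx]
  · exact mul_ne_zero (by exact_mod_cast (Real.sqrt_pos.2 (hpos x hx)).ne')
      (Complex.exp_ne_zero _)
  · rw [h₀, hsqrt a self_mem_Ici, mul_comm Complex.I, Complex.norm_mul_exp_arg_mul_I]

/-- **Solution of the ODE system (2e)/(22e).** If `α, β : [0,∞) → ℂ` are `C¹` with
`α' conj α − β conj β' = i ν₀` and `|α|² = |β|² + c` (`c > 0`), then
`α(t) = √(|β(t)|² + c) · e^{i(φ₀ + ∫₀ᵗ (ν₀ + Im(β conj β'))/(|β|² + c))}` for some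
`φ₀ ∈ ℝ` with `α(0) = √(|β(0)|² + c) e^{iφ₀}`. -/
theorem stmt_10 (c : ℝ) (hc : 0 < c) (ν₀ : ℝ) (α β : ℝ → ℂ)
    (hα : ContDiffOn ℝ 1 α (Ici 0)) (hβ : ContDiffOn ℝ 1 β (Ici 0))
    (hode : ∀ t ∈ Ici (0:ℝ),
      derivWithin α (Ici 0) t * (starRingEnd ℂ) (α t)
        - β t * (starRingEnd ℂ) (derivWithin β (Ici 0) t) = Complex.I * (ν₀ : ℂ))
    (hmod : ∀ t ∈ Ici (0:ℝ), ‖α t‖ ^ 2 = ‖β t‖ ^ 2 + c) :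
    ∃ φ₀ : ℝ, α 0 = (Real.sqrt (‖β 0‖ ^ 2 + c) : ℂ) * Complex.exp (Complex.I * (φ₀ : ℂ)) ∧
      ∀ t ∈ Ici (0:ℝ),
        α t = (Real.sqrt (‖β t‖ ^ 2 + c) : ℂ) *
          Complex.exp (Complex.I * ((φ₀ + ∫ s in (0:ℝ)..t,
            (ν₀ + (β s * (starRingEnd ℂ) (derivWithin β (Ici 0) s)).im)
              / (‖β s‖ ^ 2 + c) : ℝ) : ℝ)) := by
  set β' := derivWithin β (Ici 0)
  set u : ℝ → ℝ := fun t => ‖β t‖ ^ 2 + c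
  set g : ℝ → ℝ := fun s => (ν₀ + (β s * conj (β' s)).im) / u s
  have hu_pos : ∀ t, 0 < u t := fun t => by positivity
  have hg : ContinuousOn g (Ici 0) := by
    have := hβ.continuousOn
    have := hβ.continuousOn_derivWithin (uniqueDiffOn_Ici 0) le_rfl
    exact ContinuousOn.div (by fun_prop) (by fun_prop) fun t _ => (hu_pos t).ne'
  have hu : ∀ t ∈ Ici (0:ℝ), HasDerivWithinAt u (2 * (β t * conj (β' t)).re) (Ici 0) t :=
    fun t ht => (hβ.differentiableOn one_ne_zero t ht).hasDerivWithinAt.norm_sq_complex.add_const c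
  have hconj : ∀ t ∈ Ici (0:ℝ), derivWithin α (Ici 0) t * conj (α t) =
      (2 * (β t * conj (β' t)).re / 2 : ℝ) + Complex.I * (u t * g t : ℝ) := fun t ht => by
    rw [sub_eq_iff_eq_add.1 (hode t ht), mul_div_cancel₀ _ (hu_pos t).ne']
    apply Complex.ext <;> simp
  have hα_eq := eqOn_Ici_sqrt_mul_exp_of_deriv_mul_conj
    (fun t ht => (hα.differentiableOn one_ne_zero t ht).hasDerivWithinAt) hu
    (fun t ht => (hasDerivWithinAt_integral_Ici_s10 hg ht).const_add (α 0).arg) hmod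
    (fun t _ => hu_pos t) hconj (by simp)
  exact ⟨(α 0).arg, by simpa using hα_eq self_mem_Ici, hα_eq⟩
end
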